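/- arXiv:1611.03790 — 9 statements merged into one kernel-verified Lean document; each statement's English description precedes it below -/
import Mathlib

section
/- Let C be a CSS code and let S be a row of H_X with weight w ≥ 4. Then the code produced by the X-type generator splitting step at S is again a CSS code: its generator matrices H̃_X ∈ F₂^{(n_X+w−3)×(N+w−3)} and H̃_Z ∈ F₂^{n_Z×(N+w−3)} satisfy H̃_X · H̃_Zᵀ = 0 (i.e., every new X-type generator is orthogonal over F₂ to every new Z-type generator). -/
open Matrix

/-- The weight of a vector over `F₂`: the number of nonzero entries. -/
def wt {α : Type*} [Fintype α] (v : α → ZMod 2) : ℕ :=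
  (Finset.univ.filter fun j => v j ≠ 0).card

variable {N nX nZ : ℕ}

/-- The X-type generator matrix produced by the X-type generator splitting step at the
row `i0` of `HX`, whose support is enumerated (in a fixed order) by `q : Fin w → Fin N`.
The new code has qubits `Fin N ⊕ Fin (w-3)` (original qubits plus cut qubits
`(1),…,(w−3)`, 0-indexed here).  Its X-type generators are all rows of `HX` except `i0`,
together with `w−2` new rows whose supports are `{q₁,q₂,(1)}`,
`{(m),q_{m+2},(m+1)}` for `m = 1,…,w−4`, and `{(w−3),q_{w−1},q_w}`. -/
def stepHX (HX : Matrix (Fin nX) (Fin N) (ZMod 2)) (i0 : Fin nX)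
    (w : ℕ) (hw : 4 ≤ w) (q : Fin w → Fin N) :
    Matrix ({i : Fin nX // i ≠ i0} ⊕ Fin (w - 2)) (Fin N ⊕ Fin (w - 3)) (ZMod 2) :=
  fun r j =>
  match r, j with
  | Sum.inl i, Sum.inl p => HX i.1 p
  | Sum.inl _, Sum.inr _ => 0
  | Sum.inr r, Sum.inl p =>
      if (r.val = 0 ∧ (p = q ⟨0, by omega⟩ ∨ p = q ⟨1, by omega⟩)) ∨
         (1 ≤ r.val ∧ r.val ≤ w - 4 ∧ p = q ⟨r.val + 1, by have := r.isLt; omega⟩) ∨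
         (r.val = w - 3 ∧ (p = q ⟨w - 2, by omega⟩ ∨ p = q ⟨w - 1, by omega⟩))
      then 1 else 0
  | Sum.inr r, Sum.inr c =>
      if c.val = r.val ∨ c.val + 1 = r.val then 1 else 0

/-- The Z-type generator matrix produced by the X-type generator splitting step: each row
`R` of `HZ` is replaced by the row `R′` agreeing with `R` on the original qubits, and whose
entry at cut qubit `(m)` is the parity of `|supp(R) ∩ {q₁,…,q_{m+1}}|`. -/
def stepHZ (HZ : Matrix (Fin nZ) (Fin N) (ZMod 2)) (w : ℕ) (q : Fin w → Fin N) :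
    Matrix (Fin nZ) (Fin N ⊕ Fin (w - 3)) (ZMod 2) :=
  fun R j =>
  match j with
  | Sum.inl p => HZ R p
  | Sum.inr m => ∑ a : Fin w, if a.val ≤ m.val + 1 then HZ R (q a) else 0

lemma sum_ind_one' {α : Type*} [Fintype α] [DecidableEq α] {g : α → ZMod 2} {x : α} :
    ∑ c : α, (if c = x then (1:ZMod 2) else 0) * g c = g x := by
  simp [ite_mul]

lemma sum_ind_two' {α : Type*} [Fintype α] [DecidableEq α] {g : α → ZMod 2} {x y : α}
    (hxy : x ≠ y) :
    ∑ c : α, (if c = x ∨ c = y then (1:ZMod 2) else 0) * g c = g x + g y := by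
  have : ∀ c : α, (if c = x ∨ c = y then (1:ZMod 2) else 0) * g c
      = (if c = x then (1:ZMod 2) else 0) * g c + (if c = y then (1:ZMod 2) else 0) * g c := by
    intro c
    rcases eq_or_ne c x with rfl | hx <;> rcases eq_or_ne c y with rfl | hy <;> simp_all
  rw [Finset.sum_congr rfl fun c _ => this c, Finset.sum_add_distrib, sum_ind_one', sum_ind_one']

lemma Tzero {w : ℕ} (hw : 0 < w) (f : Fin w → ZMod 2) :
    (∑ a : Fin w, if a.val ≤ 0 then f a else 0) = f ⟨0, hw⟩ := by
  have : ∀ a : Fin w, (if a.val ≤ 0 then f a else 0) = (if a = ⟨0, hw⟩ then f a else 0) := by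
    intro a
    by_cases h : a = ⟨0, hw⟩
    · subst h; simp
    · have : a.val ≠ 0 := fun hc => h (Fin.ext hc)
      rw [if_neg (by omega), if_neg h]
  rw [Finset.sum_congr rfl fun a _ => this a, Finset.sum_ite_eq']
  simp

lemma Tsucc {w : ℕ} (f : Fin w → ZMod 2) (m : ℕ) (hm : m + 1 < w) :
    (∑ a : Fin w, if a.val ≤ m + 1 then f a else 0)
      = (∑ a : Fin w, if a.val ≤ m then f a else 0) + f ⟨m+1, hm⟩ := by
  have : ∀ a : Fin w, (if a.val ≤ m + 1 then f a else 0)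
      = (if a.val ≤ m then f a else 0) + (if a = ⟨m+1, hm⟩ then f a else 0) := by
    intro a
    rcases eq_or_ne a ⟨m+1, hm⟩ with rfl | h
    · simp
    · rw [if_neg h, add_zero]
      have hne : a.val ≠ m + 1 := fun hc => h (Fin.ext hc)
      by_cases h1 : a.val ≤ m
      · rw [if_pos (by omega), if_pos h1]
      · rw [if_neg (by omega), if_neg h1]
  rw [Finset.sum_congr rfl fun a _ => this a, Finset.sum_add_distrib, Finset.sum_ite_eq']
  simp

lemma Tstep {w : ℕ} (f : Fin w → ZMod 2) (m k : ℕ) (hk : k < w) (hmk : m + 1 = k) :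
    (∑ a : Fin w, if a.val ≤ k then f a else 0)
      = (∑ a : Fin w, if a.val ≤ m then f a else 0) + f ⟨k, hk⟩ := by
  subst hmk; exact Tsucc f m hk

lemma Ttop {w : ℕ} (f : Fin w → ZMod 2) (m : ℕ) (hm : w ≤ m + 1) :
    (∑ a : Fin w, if a.val ≤ m then f a else 0) = ∑ a : Fin w, f a := by
  refine Finset.sum_congr rfl fun a _ => ?_
  have := a.isLt
  rw [if_pos (by omega)]

/-- The X-type generator splitting step applied to a CSS code at a row `S`
of `H_X` of weight `w ≥ 4` produces again a CSS code: `H̃_X · H̃_Zᵀ = 0`. -/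
theorem stmt0 (HX : Matrix (Fin nX) (Fin N) (ZMod 2)) (HZ : Matrix (Fin nZ) (Fin N) (ZMod 2))
    (hCSS : HX * HZ.transpose = 0)
    (i0 : Fin nX) (w : ℕ) (hw : 4 ≤ w) (hwt : wt (HX i0) = w)
    (q : Fin w → Fin N) (hinj : Function.Injective q)
    (hrange : ∀ p, HX i0 p ≠ 0 ↔ p ∈ Set.range q) :
    stepHX HX i0 w hw q * (stepHZ HZ w q).transpose = 0 := by
  have hone : ∀ x : ZMod 2, x ≠ 0 → x = 1 := by decide
  have horth : ∀ R, ∑ a : Fin w, HZ R (q a) = 0 := by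
    intro R
    have h0 : ∑ p : Fin N, HX i0 p * HZ R p = 0 := by
      have := congrFun (congrFun hCSS i0) R
      simpa [Matrix.mul_apply, Matrix.transpose_apply] using this
    have him : ∑ p ∈ Finset.univ.image q, HZ R p = ∑ a : Fin w, HZ R (q a) :=
      Finset.sum_image (fun a _ b _ h => hinj h)
    have h2 : ∑ p ∈ Finset.univ.image q, HZ R p
        = ∑ p ∈ Finset.univ.image q, HX i0 p * HZ R p := by
      refine Finset.sum_congr rfl fun p hp => ?_
      have hmem : p ∈ Set.range q := by
        simp only [Finset.mem_image] at hp
        obtain ⟨a, _, rfl⟩ := hp; exact ⟨a, rfl⟩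
      rw [hone _ ((hrange p).mpr hmem), one_mul]
    have h3 : ∑ p ∈ Finset.univ.image q, HX i0 p * HZ R p
        = ∑ p : Fin N, HX i0 p * HZ R p := by
      refine Finset.sum_subset (Finset.subset_univ _) fun p _ hp => ?_
      have hnm : ¬ p ∈ Set.range q := by
        intro ⟨a, ha⟩
        exact hp (Finset.mem_image.mpr ⟨a, Finset.mem_univ a, ha⟩)
      have : HX i0 p = 0 := by
        by_contra hc; exact hnm ((hrange p).mp hc)
      rw [this, zero_mul]
    rw [← him, h2, h3, h0]
  ext r R
  rw [Matrix.mul_apply, Matrix.zero_apply, Fintype.sum_sum_type]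
  cases r with
  | inl i =>
      simp only [stepHX, stepHZ, Matrix.transpose_apply, zero_mul, Finset.sum_const_zero,
        add_zero]
      have := congrFun (congrFun hCSS i.1) R
      simpa [Matrix.mul_apply, Matrix.transpose_apply] using this
  | inr r =>
      simp only [stepHX, stepHZ, Matrix.transpose_apply]
      have hr3 := r.isLt
      rcases Nat.lt_or_ge r.val 1 with hr0 | hr1
      · -- r.val = 0
        have hr0 : r.val = 0 := by omega
        have horig : (∑ p : Fin N,
            (if (r.val = 0 ∧ (p = q ⟨0, by omega⟩ ∨ p = q ⟨1, by omega⟩)) ∨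
               (1 ≤ r.val ∧ r.val ≤ w - 4 ∧ p = q ⟨r.val + 1, by have := r.isLt; omega⟩) ∨
               (r.val = w - 3 ∧ (p = q ⟨w - 2, by omega⟩ ∨ p = q ⟨w - 1, by omega⟩))
             then (1:ZMod 2) else 0) * HZ R p)
            = HZ R (q ⟨0, by omega⟩) + HZ R (q ⟨1, by omega⟩) := by
          refine Eq.trans (Finset.sum_congr rfl fun p _ => ?_)
            (sum_ind_two' (g := fun p => HZ R p) (x := q ⟨0, by omega⟩) (y := q ⟨1, by omega⟩)
              (hinj.ne (by intro h; have h2 : (0:ℕ) = 1 := congrArg Fin.val h; omega)))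
          rw [if_congr (show _ ↔ (p = q ⟨0, by omega⟩ ∨ p = q ⟨1, by omega⟩) by
            constructor
            · rintro (⟨_, h⟩ | ⟨h1, _, _⟩ | ⟨h3, _⟩)
              · exact h
              · exact absurd h1 (by omega)
              · exact absurd h3 (by omega)
            · exact fun h => Or.inl ⟨hr0, h⟩) rfl rfl]
        have hcut : (∑ c : Fin (w-3),
            (if c.val = r.val ∨ c.val + 1 = r.val then (1:ZMod 2) else 0) *
              ∑ a : Fin w, if a.val ≤ c.val + 1 then HZ R (q a) else 0)
            = ∑ a : Fin w, if a.val ≤ ((⟨0, by omega⟩ : Fin (w-3)).val) + 1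
                then HZ R (q a) else 0 := by
          refine Eq.trans (Finset.sum_congr rfl fun c _ => ?_)
            (sum_ind_one' (g := fun c : Fin (w-3) =>
              ∑ a : Fin w, if a.val ≤ c.val + 1 then HZ R (q a) else 0)
              (x := ⟨0, by omega⟩))
          rw [if_congr (show _ ↔ (c = (⟨0, by omega⟩ : Fin (w-3))) by
            constructor
            · rintro (h | h)
              · exact Fin.ext (show c.val = 0 by omega)
              · exact absurd h (by omega)
            · rintro rfl; exact Or.inl (show (0:ℕ) = r.val by omega)) rfl rfl]
        rw [horig, hcut]
        have h1 := Tsucc (fun a => HZ R (q a)) 0 (show 0 + 1 < w by omega)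
        rw [Tzero (show 0 < w by omega) (fun a => HZ R (q a))] at h1
        have key : ∀ a b t : ZMod 2, t = a + b → a + b + t = 0 := by decide
        exact key _ _ _ h1
      · rcases Nat.lt_or_ge r.val (w - 3) with hrm | hrt
        · -- middle: 1 ≤ r.val ≤ w - 4
          have horig : (∑ p : Fin N,
              (if (r.val = 0 ∧ (p = q ⟨0, by omega⟩ ∨ p = q ⟨1, by omega⟩)) ∨
                 (1 ≤ r.val ∧ r.val ≤ w - 4 ∧ p = q ⟨r.val + 1, by have := r.isLt; omega⟩) ∨
                 (r.val = w - 3 ∧ (p = q ⟨w - 2, by omega⟩ ∨ p = q ⟨w - 1, by omega⟩))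
               then (1:ZMod 2) else 0) * HZ R p)
              = HZ R (q ⟨r.val + 1, by omega⟩) := by
            refine Eq.trans (Finset.sum_congr rfl fun p _ => ?_)
              (sum_ind_one' (g := fun p => HZ R p) (x := q ⟨r.val + 1, by omega⟩))
            rw [if_congr (show _ ↔ (p = q ⟨r.val + 1, by omega⟩) by
              constructor
              · rintro (⟨h, _⟩ | ⟨_, _, h⟩ | ⟨h3, _⟩)
                · exact absurd h (by omega)
                · exact h
                · exact absurd h3 (by omega)
              · exact fun h => Or.inr (Or.inl ⟨hr1, by omega, h⟩)) rfl rfl]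
          have hcut : (∑ c : Fin (w-3),
              (if c.val = r.val ∨ c.val + 1 = r.val then (1:ZMod 2) else 0) *
                ∑ a : Fin w, if a.val ≤ c.val + 1 then HZ R (q a) else 0)
              = (∑ a : Fin w, if a.val ≤ ((⟨r.val, by omega⟩ : Fin (w-3)).val) + 1
                  then HZ R (q a) else 0)
                + ∑ a : Fin w, if a.val ≤ ((⟨r.val - 1, by omega⟩ : Fin (w-3)).val) + 1
                  then HZ R (q a) else 0 := by
            refine Eq.trans (Finset.sum_congr rfl fun c _ => ?_)
              (sum_ind_two' (g := fun c : Fin (w-3) =>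
                ∑ a : Fin w, if a.val ≤ c.val + 1 then HZ R (q a) else 0)
                (x := ⟨r.val, by omega⟩) (y := ⟨r.val - 1, by omega⟩)
                (by intro h; have h2 : r.val = r.val - 1 := congrArg Fin.val h; omega))
            rw [if_congr (show _ ↔ (c = (⟨r.val, by omega⟩ : Fin (w-3)) ∨
                c = (⟨r.val - 1, by omega⟩ : Fin (w-3))) by
              constructor
              · rintro (h | h)
                · exact Or.inl (Fin.ext (show c.val = r.val from h))
                · exact Or.inr (Fin.ext (show c.val = r.val - 1 by omega))
              · rintro (rfl | rfl)
                · exact Or.inl rfl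
                · exact Or.inr (show r.val - 1 + 1 = r.val by omega)) rfl rfl]
          rw [horig, hcut]
          have h1 := Tstep (fun a => HZ R (q a)) (r.val - 1 + 1) (r.val + 1)
            (by omega) (by omega)
          have key : ∀ u tk tm : ZMod 2, tk = tm + u → u + (tk + tm) = 0 := by decide
          exact key _ _ _ h1
        · -- r.val = w - 3
          have hrt : r.val = w - 3 := by omega
          have horig : (∑ p : Fin N,
              (if (r.val = 0 ∧ (p = q ⟨0, by omega⟩ ∨ p = q ⟨1, by omega⟩)) ∨
                 (1 ≤ r.val ∧ r.val ≤ w - 4 ∧ p = q ⟨r.val + 1, by have := r.isLt; omega⟩) ∨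
                 (r.val = w - 3 ∧ (p = q ⟨w - 2, by omega⟩ ∨ p = q ⟨w - 1, by omega⟩))
               then (1:ZMod 2) else 0) * HZ R p)
              = HZ R (q ⟨w - 2, by omega⟩) + HZ R (q ⟨w - 1, by omega⟩) := by
            refine Eq.trans (Finset.sum_congr rfl fun p _ => ?_)
              (sum_ind_two' (g := fun p => HZ R p) (x := q ⟨w - 2, by omega⟩)
                (y := q ⟨w - 1, by omega⟩)
                (hinj.ne (by intro h; have h2 : w - 2 = w - 1 := congrArg Fin.val h; omega)))
            rw [if_congr (show _ ↔ (p = q ⟨w - 2, by omega⟩ ∨ p = q ⟨w - 1, by omega⟩) by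
              constructor
              · rintro (⟨h, _⟩ | ⟨_, h2, _⟩ | ⟨_, h⟩)
                · exact absurd h (by omega)
                · exact absurd h2 (by omega)
                · exact h
              · exact fun h => Or.inr (Or.inr ⟨hrt, h⟩)) rfl rfl]
          have hcut : (∑ c : Fin (w-3),
              (if c.val = r.val ∨ c.val + 1 = r.val then (1:ZMod 2) else 0) *
                ∑ a : Fin w, if a.val ≤ c.val + 1 then HZ R (q a) else 0)
              = ∑ a : Fin w, if a.val ≤ ((⟨w - 4, by omega⟩ : Fin (w-3)).val) + 1
                  then HZ R (q a) else 0 := by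
            refine Eq.trans (Finset.sum_congr rfl fun c _ => ?_)
              (sum_ind_one' (g := fun c : Fin (w-3) =>
                ∑ a : Fin w, if a.val ≤ c.val + 1 then HZ R (q a) else 0)
                (x := ⟨w - 4, by omega⟩))
            rw [if_congr (show _ ↔ (c = (⟨w - 4, by omega⟩ : Fin (w-3))) by
              constructor
              · rintro (h | h)
                · exact Fin.ext (show c.val = w - 4 by have := c.isLt; omega)
                · exact Fin.ext (show c.val = w - 4 by omega)
              · rintro rfl; exact Or.inr (show w - 4 + 1 = r.val by omega)) rfl rfl]
          rw [horig, hcut]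
          have h1 := Tstep (fun a => HZ R (q a)) (w - 4 + 1) (w - 2) (by omega) (by omega)
          have h2 := Tstep (fun a => HZ R (q a)) (w - 2) (w - 1) (by omega) (by omega)
          have htop := Ttop (fun a => HZ R (q a)) (w - 1) (by omega)
          have key : ∀ a b t1 t2 t3 s : ZMod 2,
              t2 = t1 + a → t3 = t2 + b → t3 = s → s = 0 → a + b + t1 = 0 := by decide
          exact key _ _ _ _ _ _ h1 h2 htop (horth R)
end

section
/- Let C̃ be obtained from a CSS code C by the full X-type generator splitting procedure. Then q̃_Z ≤ max(⌊w_X/2⌋·q_Z, q_Z); that is, every column of H̃_Z has weight at most max(w_X·q_Z/2, q_Z). -/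
open Matrix

/-- Maximum weight of a row of a matrix over `F₂`. -/
def maxRowW {m α : Type*} [Fintype m] [Fintype α] (M : Matrix m α (ZMod 2)) : ℕ :=
  Finset.univ.sup fun i => wt (M i)

/-- Maximum weight of a column of a matrix over `F₂`. -/
def maxColW {m α : Type*} [Fintype m] [Fintype α] (M : Matrix m α (ZMod 2)) : ℕ :=
  Finset.univ.sup fun j => wt fun i => M i j

/-- Total number of nonzero entries of a matrix over `F₂`. -/
def totW {m α : Type*} [Fintype m] [Fintype α] (M : Matrix m α (ZMod 2)) : ℕ :=
  ∑ i, wt (M i)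

variable {N nX nZ : ℕ}

/-- Qubits of the code obtained by the full X-type generator splitting procedure:
the original `N` qubits, plus, for each row of `HX` of weight `w ≥ 4` (a "heavy" row),
cut qubits `(1),…,(w−3)` (0-indexed below). -/
abbrev SplitQ (HX : Matrix (Fin nX) (Fin N) (ZMod 2)) : Type :=
  Fin N ⊕ Σ i : {i : Fin nX // 4 ≤ wt (HX i)}, Fin (wt (HX i.1) - 3)

/-- X-type generators of the fully split code: the rows of `HX` of weight `≤ 3`,
plus, for each heavy row, the `w−2` rows created by splitting it. -/
abbrev SplitXIdx (HX : Matrix (Fin nX) (Fin N) (ZMod 2)) : Type :=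
  {i : Fin nX // ¬ 4 ≤ wt (HX i)} ⊕ Σ i : {i : Fin nX // 4 ≤ wt (HX i)}, Fin (wt (HX i.1) - 2)

/-- X-type generator matrix of the code `C̃` obtained from `C` by applying the X-type
generator splitting step once to each row of `HX` of weight at least 4 (the result is the
same in any order).  Here `q i` enumerates, in a fixed order, the support of the heavy
row `i`.  Splitting a heavy row with support `{q₁,…,q_w}` produces `w−2` rows with
supports `{q₁,q₂,(1)}`, `{(m),q_{m+2},(m+1)}` for `m = 1,…,w−4`, and `{(w−3),q_{w−1},q_w}`,
on the original qubits together with that row's own cut qubits. -/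
def splitHX (HX : Matrix (Fin nX) (Fin N) (ZMod 2))
    (q : ∀ i : {i : Fin nX // 4 ≤ wt (HX i)}, Fin (wt (HX i.1)) → Fin N) :
    Matrix (SplitXIdx HX) (SplitQ HX) (ZMod 2) := fun r j =>
  match r, j with
  | Sum.inl i, Sum.inl p => HX i.1 p
  | Sum.inl _, Sum.inr _ => 0
  | Sum.inr ⟨i, r⟩, Sum.inl p =>
      have hw : 4 ≤ wt (HX i.1) := i.2
      if (r.val = 0 ∧ (p = q i ⟨0, by omega⟩ ∨ p = q i ⟨1, by omega⟩)) ∨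
         (1 ≤ r.val ∧ r.val ≤ wt (HX i.1) - 4 ∧
           p = q i ⟨r.val + 1, by have := r.isLt; omega⟩) ∨
         (r.val = wt (HX i.1) - 3 ∧
           (p = q i ⟨wt (HX i.1) - 2, by omega⟩ ∨ p = q i ⟨wt (HX i.1) - 1, by omega⟩))
      then 1 else 0
  | Sum.inr ⟨i, r⟩, Sum.inr ⟨i', c⟩ =>
      if i' = i ∧ (c.val = r.val ∨ c.val + 1 = r.val) then 1 else 0

/-- Z-type generator matrix of the code `C̃` obtained from `C` by the full X-type generator
splitting procedure: each row `R` of `HZ` agrees with `R` on the original qubits, and its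
entry at the cut qubit `(m)` of heavy row `i` is the parity of
`|supp(R) ∩ {q_{i,1},…,q_{i,m+1}}|`. -/
def splitHZ (HX : Matrix (Fin nX) (Fin N) (ZMod 2)) (HZ : Matrix (Fin nZ) (Fin N) (ZMod 2))
    (q : ∀ i : {i : Fin nX // 4 ≤ wt (HX i)}, Fin (wt (HX i.1)) → Fin N) :
    Matrix (Fin nZ) (SplitQ HX) (ZMod 2) := fun R j =>
  match j with
  | Sum.inl p => HZ R p
  | Sum.inr ⟨i, m⟩ => ∑ a : Fin (wt (HX i.1)), if a.val ≤ m.val + 1 then HZ R (q i a) else 0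


lemma wt_le_of_forall_exists {nZ : ℕ} {ι : Type*} [Fintype ι] [DecidableEq ι]
    (f : Fin nZ → ZMod 2) (T : Finset ι) (g : ι → Fin nZ → ZMod 2)
    (h : ∀ R, f R ≠ 0 → ∃ a ∈ T, g a R ≠ 0) (B : ℕ) (hg : ∀ a, wt (g a) ≤ B) :
    wt f ≤ T.card * B := by
  classical
  have hsub : (Finset.univ.filter fun R => f R ≠ 0) ⊆
      T.biUnion (fun a => Finset.univ.filter fun R => g a R ≠ 0) := by
    intro R hR
    simp only [Finset.mem_filter, Finset.mem_univ, true_and] at hR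
    obtain ⟨a, ha, hga⟩ := h R hR
    exact Finset.mem_biUnion.2 ⟨a, ha, by simp [hga]⟩
  calc wt f ≤ (T.biUnion (fun a => Finset.univ.filter fun R => g a R ≠ 0)).card :=
        Finset.card_le_card hsub
    _ ≤ ∑ a ∈ T, (Finset.univ.filter fun R => g a R ≠ 0).card := Finset.card_biUnion_le
    _ ≤ ∑ a ∈ T, B := Finset.sum_le_sum (fun a _ => hg a)
    _ = T.card * B := by rw [Finset.sum_const, smul_eq_mul]

/-- For the code `C̃` obtained by the full X-type generator splitting
procedure, every column of `H̃_Z` has weight at most `max(⌊w_X/2⌋·q_Z, q_Z)`. -/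
theorem stmt2 (HX : Matrix (Fin nX) (Fin N) (ZMod 2)) (HZ : Matrix (Fin nZ) (Fin N) (ZMod 2))
    (hCSS : HX * HZ.transpose = 0)
    (q : ∀ i : {i : Fin nX // 4 ≤ wt (HX i)}, Fin (wt (HX i.1)) → Fin N)
    (hinj : ∀ i, Function.Injective (q i))
    (hrange : ∀ i p, HX i.1 p ≠ 0 ↔ p ∈ Set.range (q i)) :
    ∀ p : SplitQ HX,
      wt (fun R => splitHZ HX HZ q R p) ≤ max (maxRowW HX / 2 * maxColW HZ) (maxColW HZ) := by
    classical
  intro p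
  cases p with
  | inl p =>
      have hcol : wt (fun R => splitHZ HX HZ q R (Sum.inl p)) = wt (fun R => HZ R p) := rfl
      rw [hcol]
      exact le_max_of_le_right (Finset.le_sup (f := fun j => wt fun R => HZ R j) (Finset.mem_univ p))
  | inr j =>
      obtain ⟨i, m⟩ := j
      have hw : 4 ≤ (wt (HX i.1)) := i.2
      have hm : m.val < (wt (HX i.1)) - 3 := m.isLt
      set B := maxColW HZ with hB
      have hgB : ∀ a : Fin (wt (HX i.1)), wt (fun R => HZ R (q i a)) ≤ B :=
        fun a => Finset.le_sup (f := fun j => wt fun R => HZ R j) (Finset.mem_univ (q i a))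
      -- full sum is zero
      have hfull : ∀ R, ∑ a : Fin (wt (HX i.1)), HZ R (q i a) = 0 := by
        intro R
        have h0 := congrFun (congrFun hCSS i.1) R
        simp only [Matrix.mul_apply, Matrix.transpose_apply, Matrix.zero_apply] at h0
        have himg : (Finset.univ.image (q i)) = Finset.univ.filter (fun p => HX i.1 p ≠ 0) := by
          ext p
          simp [hrange i p, Set.mem_range, eq_comm]
        have hmul : ∀ x y : ZMod 2, x * y = if x ≠ 0 then y else 0 := by decide
        calc ∑ a : Fin (wt (HX i.1)), HZ R (q i a)
            = ∑ p ∈ Finset.univ.image (q i), HZ R p :=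
              (Finset.sum_image (fun a _ b _ h => hinj i h)).symm
          _ = ∑ p ∈ Finset.univ.filter (fun p => HX i.1 p ≠ 0), HZ R p := by rw [himg]
          _ = ∑ p, if HX i.1 p ≠ 0 then HZ R p else 0 := Finset.sum_filter _ _
          _ = ∑ p, HX i.1 p * HZ R p := by
              exact Finset.sum_congr rfl (fun p _ => (hmul _ _).symm)
          _ = 0 := h0
      set Tp := Finset.univ.filter (fun a : Fin (wt (HX i.1)) => a.val ≤ m.val + 1) with hTp
      set Ts := Finset.univ.filter (fun a : Fin (wt (HX i.1)) => ¬ a.val ≤ m.val + 1) with hTs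
      have hf : ∀ R, splitHZ HX HZ q R (Sum.inr ⟨i, m⟩) = ∑ a ∈ Tp, HZ R (q i a) := by
        intro R
        show (∑ a : Fin (wt (HX i.1)), if a.val ≤ m.val + 1 then HZ R (q i a) else 0) = _
        rw [hTp, Finset.sum_filter]
      have hfs : ∀ R, splitHZ HX HZ q R (Sum.inr ⟨i, m⟩) = ∑ a ∈ Ts, HZ R (q i a) := by
        intro R
        have hsplit : (∑ a ∈ Tp, HZ R (q i a)) + (∑ a ∈ Ts, HZ R (q i a)) = 0 := by
          rw [hTp, hTs, Finset.sum_filter_add_sum_filter_not]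
          exact hfull R
        have h2 : ∀ x y : ZMod 2, x + y = 0 → x = y := by decide
        rw [hf R]
        exact h2 _ _ hsplit
      have hcardp : Tp.card = m.val + 2 := by
        have : Tp = Finset.map (Fin.castLEEmb (by omega : m.val + 2 ≤ (wt (HX i.1)))) Finset.univ := by
          ext a
          simp only [hTp, Finset.mem_filter, Finset.mem_univ, true_and, Finset.mem_map,
            Fin.castLEEmb_apply]
          constructor
          · intro h
            exact ⟨⟨a.val, by omega⟩, by ext; simp⟩
          · rintro ⟨b, rfl⟩
            simp [Nat.lt_succ_iff.mp b.isLt]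
        rw [this, Finset.card_map, Finset.card_univ, Fintype.card_fin]
      have hcards : Ts.card = (wt (HX i.1)) - m.val - 2 := by
        have htot := Finset.card_filter_add_card_filter_not
          (s := (Finset.univ : Finset (Fin (wt (HX i.1))))) (p := fun a => a.val ≤ m.val + 1)
        rw [Finset.card_univ, Fintype.card_fin, ← hTp, ← hTs] at htot
        omega
      have hwle : (wt (HX i.1)) ≤ maxRowW HX := Finset.le_sup (f := fun r => wt (HX r)) (Finset.mem_univ i.1)
      by_cases hc : m.val + 2 ≤ (wt (HX i.1)) - m.val - 2
      · have hb := wt_le_of_forall_exists (fun R => splitHZ HX HZ q R (Sum.inr ⟨i, m⟩)) Tp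
          (fun a R => HZ R (q i a)) (fun R hR => by
            by_contra hcon
            push_neg at hcon
            exact hR (show splitHZ HX HZ q R (Sum.inr ⟨i, m⟩) = 0 by rw [hf R]; exact Finset.sum_eq_zero hcon)) B hgB
        rw [hcardp] at hb
        refine le_trans hb (le_max_of_le_left ?_)
        have h1 : m.val + 2 ≤ (wt (HX i.1)) / 2 := by omega
        have h2 : (wt (HX i.1)) / 2 ≤ maxRowW HX / 2 := Nat.div_le_div_right hwle
        exact Nat.mul_le_mul_right B (le_trans h1 h2)
      · have hb := wt_le_of_forall_exists (fun R => splitHZ HX HZ q R (Sum.inr ⟨i, m⟩)) Ts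
          (fun a R => HZ R (q i a)) (fun R hR => by
            by_contra hcon
            push_neg at hcon
            exact hR (show splitHZ HX HZ q R (Sum.inr ⟨i, m⟩) = 0 by rw [hfs R]; exact Finset.sum_eq_zero hcon)) B hgB
        rw [hcards] at hb
        refine le_trans hb (le_max_of_le_left ?_)
        have h1 : (wt (HX i.1)) - m.val - 2 ≤ (wt (HX i.1)) / 2 := by omega
        have h2 : (wt (HX i.1)) / 2 ≤ maxRowW HX / 2 := Nat.div_le_div_right hwle
        exact Nat.mul_le_mul_right B (le_trans h1 h2)
end

section
/- Let C̃ be obtained from a CSS code C by the full X-type generator splitting procedure. Then the number of logical qubits is unchanged: K̃ = K, where K = N − rank(H_X) − rank(H_Z) and K̃ = Ñ − rank(H̃_X) − rank(H̃_Z). -/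
open Matrix

variable {N nX nZ : ℕ}

/-!
Splitting a row of weight `w` adds `w - 3` cut qubits. The `w - 2` new rows sum to the old
row extended by zero, so the row space of `H̃_X` contains that of `H_X`, placed in the kernel of
the projection onto the cut qubits. This projection maps the new rows of a block to
`e₀, e₀ + e₁, …, e_{w-5} + e_{w-4}, e_{w-4}` and is therefore onto. Conversely, the old rows
together with the new rows other than the first one of each block span the row space of `H̃_X`,
and there are as many of the latter as cut qubits. Hence `rank H̃_X = rank H_X + #cuts`.
On the Z side, `H̃_Z = H_Z · E` for a fixed matrix `E`, and `H_Z` is a column submatrix of `H̃_Z`,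
so `rank H̃_Z = rank H_Z`. Both `Ñ` and `rank H̃_X` thus grow by the number of cut qubits.
-/

open Module Submodule

theorem Submodule.finrank_eq_add_of_map_eq_top {K M F ι : Type*} [Field K] [AddCommGroup M]
    [Module K M] [Module.Finite K M] [AddCommGroup F] [Module K F]
    [Fintype ι] {U V : Submodule K M} {f : M →ₗ[K] F} {t : ι → M}
    (hUV : U ≤ V) (hUf : U ≤ LinearMap.ker f) (hf : V.map f = ⊤)
    (hV : V ≤ U ⊔ span K (Set.range t)) (ht : Fintype.card ι ≤ finrank K F) :
    finrank K V = finrank K U + finrank K F := by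
  refine le_antisymm ?_ ?_
  · calc finrank K V ≤ finrank K ↥(U ⊔ span K (Set.range t)) := finrank_mono hV
      _ ≤ finrank K U + finrank K ↥(span K (Set.range t)) :=
        finrank_add_le_finrank_add_finrank _ _
      _ ≤ finrank K U + finrank K F := by
        gcongr
        exact (finrank_range_le_card t).trans ht
  · have hrank := LinearMap.finrank_range_add_finrank_ker (f.domRestrict V)
    rw [LinearMap.range_domRestrict, hf, finrank_top, LinearMap.ker_domRestrict] at hrank
    have hker : finrank K U ≤ finrank K ↥((LinearMap.ker f).comap V.subtype) :=
      calc finrank K U = finrank K ↥(U.comap V.subtype) :=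
            (comapSubtypeEquivOfLe hUV).finrank_eq.symm
        _ ≤ _ := finrank_mono (comap_mono hUf)
    omega

-- `rank_eq_finrank_span_row` spans `Set.range A.row`, which rewriting does not identify with
-- `Set.range A`.
theorem Matrix.rank_eq_finrank_span_range {m n K : Type*} [Field K] [Finite m] [Fintype n]
    (A : Matrix m n K) : A.rank = finrank K (span K (Set.range A)) :=
  A.rank_eq_finrank_span_row

def LinearMap.extendSumInl (R α β : Type*) [Semiring R] : (α → R) →ₗ[R] (α ⊕ β → R) :=
  (LinearEquiv.sumArrowLequivProdArrow α β R R).symm.toLinearMap ∘ₗ LinearMap.inl R _ _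

theorem LinearMap.extendSumInl_injective (R α β : Type*) [Semiring R] :
    Function.Injective (LinearMap.extendSumInl R α β) := by
  rw [LinearMap.extendSumInl, LinearMap.coe_comp]
  exact (LinearEquiv.injective _).comp LinearMap.inl_injective

abbrev CutQ (HX : Matrix (Fin nX) (Fin N) (ZMod 2)) : Type :=
  Σ i : {i : Fin nX // 4 ≤ wt (HX i)}, Fin (wt (HX i.1) - 3)

theorem card_splitQ (HX : Matrix (Fin nX) (Fin N) (ZMod 2)) :
    Fintype.card (SplitQ HX) = N + Fintype.card (CutQ HX) := by
  rw [Fintype.card_sum, Fintype.card_fin]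

section Splitting

variable {HX : Matrix (Fin nX) (Fin N) (ZMod 2)}
  {q : ∀ i : {i : Fin nX // 4 ≤ wt (HX i)}, Fin (wt (HX i.1)) → Fin N}

theorem CutQ.mk_eq_mk_iff {i i' : {i : Fin nX // 4 ≤ wt (HX i)}} {c : Fin (wt (HX i.1) - 3)}
    {c' : Fin (wt (HX i'.1) - 3)} :
    (⟨i, c⟩ : CutQ HX) = ⟨i', c'⟩ ↔ i = i' ∧ c.val = c'.val := by
  rw [Sigma.mk.inj_iff]
  constructor
  · rintro ⟨rfl, h⟩
    exact ⟨rfl, congrArg Fin.val (eq_of_heq h)⟩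
  · rintro ⟨rfl, h⟩
    exact ⟨rfl, heq_of_eq (Fin.ext h)⟩

theorem splitHZ_mul {n : ℕ} (HZ : Matrix (Fin nZ) (Fin n) (ZMod 2))
    (M : Matrix (Fin n) (Fin N) (ZMod 2)) :
    splitHZ HX (HZ * M) q = HZ * splitHZ HX M q := by
  funext R j
  rcases j with p | ⟨i, m⟩
  · rfl
  · simp only [splitHZ, Matrix.mul_apply, Finset.mul_sum]
    rw [Finset.sum_comm]
    refine Finset.sum_congr rfl fun a _ => ?_
    split_ifs <;> simp

theorem rank_splitHZ (HZ : Matrix (Fin nZ) (Fin N) (ZMod 2)) :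
    (splitHZ HX HZ q).rank = HZ.rank := by
  refine le_antisymm ?_ (rank_submatrix_le (splitHZ HX HZ q) id Sum.inl)
  have hfactor := splitHZ_mul (q := q) HZ 1
  rw [Matrix.mul_one] at hfactor
  rw [hfactor]
  exact rank_mul_le_left _ _

theorem splitHX_inl (i : {i : Fin nX // ¬ 4 ≤ wt (HX i)}) :
    splitHX HX q (Sum.inl i) = LinearMap.extendSumInl (ZMod 2) (Fin N) (CutQ HX) (HX i) := by
  funext j
  rcases j with p | c <;> rfl

theorem sum_splitHX_block_inr (i : {i : Fin nX // 4 ≤ wt (HX i)}) (c : CutQ HX) :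
    ∑ r, splitHX HX q (Sum.inr ⟨i, r⟩) (Sum.inr c) = 0 := by
  obtain ⟨i', c⟩ := c
  simp only [splitHX, Finset.sum_boole]
  rcases eq_or_ne i' i with rfl | hi
  · have hc := c.isLt
    have hpair : (Finset.univ.filter fun r : Fin (wt (HX i'.1) - 2) =>
        i' = i' ∧ (c.val = r.val ∨ c.val + 1 = r.val)).card = 2 :=
      Finset.card_eq_two.2 ⟨⟨c, by omega⟩, ⟨c + 1, by omega⟩, by simp [Fin.ext_iff],
        by ext r; simp [Fin.ext_iff, eq_comm]⟩
    rw [hpair]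
    rfl
  · simp [hi]

theorem sum_splitHX_block_inl (hinj : ∀ i, Function.Injective (q i))
    (hrange : ∀ i p, HX i.1 p ≠ 0 ↔ p ∈ Set.range (q i))
    (i : {i : Fin nX // 4 ≤ wt (HX i)}) (p : Fin N) :
    ∑ r, splitHX HX q (Sum.inr ⟨i, r⟩) (Sum.inl p) = HX i p := by
  have hw := i.2
  by_cases hp : p ∈ Set.range (q i)
  · obtain ⟨a, rfl⟩ := hp
    have ha := a.isLt
    have hone : HX i (q i a) = 1 := Fin.eq_one_of_ne_zero _ ((hrange i _).2 ⟨a, rfl⟩)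
    simp only [splitHX, (hinj i).eq_iff, Fin.ext_iff, hone, Finset.sum_boole]
    rw [← Nat.cast_one]
    congr 1
    -- `q_a` lies in exactly one new row
    refine Finset.card_eq_one.2 ⟨⟨if a.val ≤ 1 then 0 else if a.val ≤ wt (HX i.1) - 3 then
      a.val - 1 else wt (HX i.1) - 3, by split_ifs <;> omega⟩, ?_⟩
    ext r
    have hr := r.isLt
    simp only [Finset.mem_filter, Finset.mem_univ, true_and, Finset.mem_singleton, Fin.ext_iff]
    split_ifs <;> omega
  · have hzero : HX i p = 0 := by simpa using mt (hrange i p).1 hp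
    rw [hzero]
    refine Finset.sum_eq_zero fun r _ => if_neg ?_
    rintro (⟨-, h | h⟩ | ⟨-, -, h⟩ | ⟨-, h | h⟩) <;> exact hp ⟨_, h.symm⟩

theorem sum_splitHX_block (hinj : ∀ i, Function.Injective (q i))
    (hrange : ∀ i p, HX i.1 p ≠ 0 ↔ p ∈ Set.range (q i)) (i : {i : Fin nX // 4 ≤ wt (HX i)}) :
    ∑ r, splitHX HX q (Sum.inr ⟨i, r⟩) =
      LinearMap.extendSumInl (ZMod 2) (Fin N) (CutQ HX) (HX i) := by
  funext j
  rw [Finset.sum_apply]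
  rcases j with p | c
  · exact sum_splitHX_block_inl hinj hrange i p
  · exact sum_splitHX_block_inr i c

theorem extendSumInl_row_mem_span_splitHX (hinj : ∀ i, Function.Injective (q i))
    (hrange : ∀ i p, HX i.1 p ≠ 0 ↔ p ∈ Set.range (q i)) (i : Fin nX) :
    LinearMap.extendSumInl (ZMod 2) (Fin N) (CutQ HX) (HX i) ∈
      span (ZMod 2) (Set.range (splitHX HX q)) := by
  by_cases hi : 4 ≤ wt (HX i)
  · rw [← sum_splitHX_block hinj hrange ⟨i, hi⟩]
    exact sum_mem fun r _ => subset_span ⟨_, rfl⟩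
  · exact subset_span ⟨Sum.inl ⟨i, hi⟩, splitHX_inl ⟨i, hi⟩⟩

theorem single_mem_map_span_splitHX (i : {i : Fin nX // 4 ≤ wt (HX i)}) :
    ∀ (k : ℕ) (hk : k < wt (HX i) - 3), Pi.single (⟨i, ⟨k, hk⟩⟩ : CutQ HX) (1 : ZMod 2) ∈
      (span (ZMod 2) (Set.range (splitHX HX q))).map
        (LinearMap.funLeft (ZMod 2) (ZMod 2) Sum.inr)
  | 0, hk => by
    refine ⟨splitHX HX q (Sum.inr ⟨i, ⟨0, by omega⟩⟩), subset_span ⟨_, rfl⟩, ?_⟩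
    funext ⟨i', c⟩
    simp only [LinearMap.funLeft_apply, splitHX, Pi.single_apply, CutQ.mk_eq_mk_iff]
    by_cases hi : i' = i <;> simp [hi]
  | k + 1, hk => by
    have hrow : LinearMap.funLeft (ZMod 2) (ZMod 2) Sum.inr
        (splitHX HX q (Sum.inr ⟨i, ⟨k + 1, by omega⟩⟩)) =
          Pi.single (⟨i, ⟨k, by omega⟩⟩ : CutQ HX) 1 +
            Pi.single (⟨i, ⟨k + 1, hk⟩⟩ : CutQ HX) 1 := by
      funext ⟨i', c⟩
      simp only [LinearMap.funLeft_apply, splitHX, Pi.add_apply, Pi.single_apply,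
        CutQ.mk_eq_mk_iff]
      rcases eq_or_ne i' i with rfl | hi
      · simp only [true_and]
        split_ifs <;> first | decide | omega
      · simp [hi]
    rw [← add_sub_cancel_left (Pi.single (⟨i, ⟨k, by omega⟩⟩ : CutQ HX) (1 : ZMod 2))
      (Pi.single _ 1), ← hrow]
    exact sub_mem ⟨_, subset_span ⟨_, rfl⟩, rfl⟩ (single_mem_map_span_splitHX i k (by omega))

theorem map_span_splitHX_eq_top :
    (span (ZMod 2) (Set.range (splitHX HX q))).map
      (LinearMap.funLeft (ZMod 2) (ZMod 2) (Sum.inr : CutQ HX → SplitQ HX)) = ⊤ := by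
  rw [eq_top_iff, ← (Pi.basisFun (ZMod 2) (CutQ HX)).span_eq, span_le]
  rintro _ ⟨⟨i, c⟩, rfl⟩
  rw [Pi.basisFun_apply]
  exact single_mem_map_span_splitHX i c c.isLt

variable (q) in
def splitHXTailRow (c : CutQ HX) : SplitQ HX → ZMod 2 :=
  splitHX HX q (Sum.inr ⟨c.1, ⟨c.2 + 1, by have := c.1.2; have := c.2.isLt; omega⟩⟩)

theorem splitHX_mem_span_splitHXTailRow {i : {i : Fin nX // 4 ≤ wt (HX i)}}
    {r : Fin (wt (HX i) - 2)} (hr : r.val ≠ 0) :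
    splitHX HX q (Sum.inr ⟨i, r⟩) ∈ span (ZMod 2) (Set.range (splitHXTailRow q)) := by
  refine subset_span ⟨⟨i, ⟨r - 1, by omega⟩⟩, ?_⟩
  simp only [splitHXTailRow]
  congr
  omega

theorem span_splitHX_le_sup (hinj : ∀ i, Function.Injective (q i))
    (hrange : ∀ i p, HX i.1 p ≠ 0 ↔ p ∈ Set.range (q i)) :
    span (ZMod 2) (Set.range (splitHX HX q)) ≤
      (span (ZMod 2) (Set.range HX)).map (LinearMap.extendSumInl (ZMod 2) (Fin N) (CutQ HX)) ⊔
        span (ZMod 2) (Set.range (splitHXTailRow q)) := by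
  have hrow (i : Fin nX) : LinearMap.extendSumInl (ZMod 2) (Fin N) (CutQ HX) (HX i) ∈
      (span (ZMod 2) (Set.range HX)).map (LinearMap.extendSumInl (ZMod 2) (Fin N) (CutQ HX)) ⊔
        span (ZMod 2) (Set.range (splitHXTailRow q)) :=
    mem_sup_left (mem_map_of_mem (subset_span ⟨i, rfl⟩))
  rw [span_le]
  rintro _ ⟨(i | ⟨i, r⟩), rfl⟩
  · rw [splitHX_inl]
    exact hrow i.1
  · by_cases hr : r.val = 0
    · -- the first new row is the old row minus all the others
      rw [eq_sub_of_add_eq ((Finset.add_sum_erase _ (fun r' => splitHX HX q (Sum.inr ⟨i, r'⟩))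
        (Finset.mem_univ r)).trans (sum_splitHX_block hinj hrange i))]
      exact sub_mem (hrow i) (sum_mem fun r' hr' => mem_sup_right
        (splitHX_mem_span_splitHXTailRow fun h =>
          Finset.ne_of_mem_erase hr' (Fin.ext (h.trans hr.symm))))
    · exact mem_sup_right (splitHX_mem_span_splitHXTailRow hr)

theorem rank_splitHX (hinj : ∀ i, Function.Injective (q i))
    (hrange : ∀ i p, HX i.1 p ≠ 0 ↔ p ∈ Set.range (q i)) :
    (splitHX HX q).rank = HX.rank + Fintype.card (CutQ HX) := by
  have hmap := LinearEquiv.finrank_eq <| Submodule.equivMapOfInjective _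
    (LinearMap.extendSumInl_injective (ZMod 2) (Fin N) (CutQ HX)) (span (ZMod 2) (Set.range HX))
  rw [rank_eq_finrank_span_range, rank_eq_finrank_span_range, hmap,
    ← Module.finrank_fintype_fun_eq_card (ZMod 2)]
  refine Submodule.finrank_eq_add_of_map_eq_top ?_ ?_ map_span_splitHX_eq_top
    (span_splitHX_le_sup hinj hrange) (finrank_fintype_fun_eq_card (ZMod 2)).ge
  · rw [map_span, span_le]
    rintro _ ⟨_, ⟨i, rfl⟩, rfl⟩
    exact extendSumInl_row_mem_span_splitHX hinj hrange i
  · rintro _ ⟨f, -, rfl⟩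
    rfl

end Splitting

theorem stmt3_general (HX : Matrix (Fin nX) (Fin N) (ZMod 2)) (HZ : Matrix (Fin nZ) (Fin N) (ZMod 2))
    (q : ∀ i : {i : Fin nX // 4 ≤ wt (HX i)}, Fin (wt (HX i.1)) → Fin N)
    (hinj : ∀ i, Function.Injective (q i))
    (hrange : ∀ i p, HX i.1 p ≠ 0 ↔ p ∈ Set.range (q i)) :
    Fintype.card (SplitQ HX) - (splitHX HX q).rank - (splitHZ HX HZ q).rank
      = N - HX.rank - HZ.rank := by
  rw [card_splitQ, rank_splitHX hinj hrange, rank_splitHZ]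
  omega

/-- The full X-type generator splitting procedure does not change the
number of logical qubits: `K̃ = Ñ − rank(H̃_X) − rank(H̃_Z)` equals
`K = N − rank(H_X) − rank(H_Z)`. -/
theorem stmt3 (HX : Matrix (Fin nX) (Fin N) (ZMod 2)) (HZ : Matrix (Fin nZ) (Fin N) (ZMod 2))
    (hCSS : HX * HZ.transpose = 0)
    (q : ∀ i : {i : Fin nX // 4 ≤ wt (HX i)}, Fin (wt (HX i.1)) → Fin N)
    (hinj : ∀ i, Function.Injective (q i))
    (hrange : ∀ i p, HX i.1 p ≠ 0 ↔ p ∈ Set.range (q i)) :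
    Fintype.card (SplitQ HX) - (splitHX HX q).rank - (splitHZ HX HZ q).rank
      = N - HX.rank - HZ.rank :=
  stmt3_general HX HZ q hinj hrange
end

section
/- Let C be a CSS code with K ≥ 1 and let C̃ be obtained from C by the full X-type generator splitting procedure. Then the Z-distance does not decrease: d̃_Z ≥ d_Z. -/
/-!
Restricting to the original qubits sends every vector of `ker H̃_X` to one of `ker H_X` of no
larger weight. The new generators of a split row act along the path `q₁, (1), …, (w−3), q_w`, so
a vector of `ker H̃_X` must carry on the cut qubit `(m)` the parity of its entries on
`q₁, …, q_{m+1}`, and the last of them then enforces the old check. Hence `ker H̃_X` is the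
image of `ker H_X` under this parity extension, which also sends the rows of `H_Z` to those of
`H̃_Z`: a restriction lying in the row space of `H_Z` would put the vector itself in the row
space of `H̃_Z`.
-/

open Matrix

variable {N nX nZ : ℕ}

/-- `distX HX HZ` is the X-distance of the CSS code with generator matrices `HX`, `HZ`:
the minimum weight of a vector in `ker(HZ)` not lying in the row space of `HX`. -/
noncomputable def distX {mX mZ α : Type*} [Fintype mX] [Fintype mZ] [Fintype α]
    (HX : Matrix mX α (ZMod 2)) (HZ : Matrix mZ α (ZMod 2)) : ℕ :=
  sInf {k | ∃ v : α → ZMod 2, HZ.mulVec v = 0 ∧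
    v ∉ Submodule.span (ZMod 2) (Set.range HX) ∧ wt v = k}

/-- `distZ HX HZ` is the Z-distance of the CSS code with generator matrices `HX`, `HZ`:
the minimum weight of a vector in `ker(HX)` not lying in the row space of `HZ`. -/
noncomputable def distZ {mX mZ α : Type*} [Fintype mX] [Fintype mZ] [Fintype α]
    (HX : Matrix mX α (ZMod 2)) (HZ : Matrix mZ α (ZMod 2)) : ℕ :=
  sInf {k | ∃ v : α → ZMod 2, HX.mulVec v = 0 ∧
    v ∉ Submodule.span (ZMod 2) (Set.range HZ) ∧ wt v = k}

open Finset

lemma wt_comp_le_of_injective {α β : Type*} [Fintype α] [Fintype β] {f : α → β}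
    (hf : Function.Injective f) (u : β → ZMod 2) : wt (u ∘ f) ≤ wt u :=
  Finset.card_le_card_of_injOn f (fun a ha => by simpa using ha) hf.injOn

lemma apply_mem_span_range_comp {R M M' ι : Type*} [Semiring R] [AddCommMonoid M] [Module R M]
    [AddCommMonoid M'] [Module R M'] (f : M →ₗ[R] M') {v : ι → M} {x : M}
    (hx : x ∈ Submodule.span R (Set.range v)) : f x ∈ Submodule.span R (Set.range (f ∘ v)) := by
  rw [Set.range_comp]
  exact Submodule.apply_mem_span_image_of_mem_span f hx

def IsZLogical {mX mZ α : Type*} [Fintype mX] [Fintype mZ] [Fintype α]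
    (HX : Matrix mX α (ZMod 2)) (HZ : Matrix mZ α (ZMod 2)) (v : α → ZMod 2) : Prop :=
  HX *ᵥ v = 0 ∧ v ∉ Submodule.span (ZMod 2) (Set.range HZ)

lemma distZ_le_distZ_of_exists_le {mX mZ α mX' mZ' α' : Type*} [Fintype mX] [Fintype mZ] [Fintype α]
    [Fintype mX'] [Fintype mZ'] [Fintype α']
    {HX : Matrix mX α (ZMod 2)} {HZ : Matrix mZ α (ZMod 2)}
    {HX' : Matrix mX' α' (ZMod 2)} {HZ' : Matrix mZ' α' (ZMod 2)}
    (hle : ∀ u, IsZLogical HX' HZ' u → ∃ v, IsZLogical HX HZ v ∧ wt v ≤ wt u)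
    (hex : ∀ v, IsZLogical HX HZ v → ∃ u, IsZLogical HX' HZ' u) :
    distZ HX HZ ≤ distZ HX' HZ' := by
  rcases Set.eq_empty_or_nonempty {k | ∃ v, HX *ᵥ v = 0 ∧
      v ∉ Submodule.span (ZMod 2) (Set.range HZ) ∧ wt v = k} with hS | ⟨_, v, hv₁, hv₂, -⟩
  · simp [distZ, hS]
  obtain ⟨u, hu⟩ := hex v ⟨hv₁, hv₂⟩
  have hT : {k | ∃ u, HX' *ᵥ u = 0 ∧
      u ∉ Submodule.span (ZMod 2) (Set.range HZ') ∧ wt u = k}.Nonempty := ⟨_, u, hu.1, hu.2, rfl⟩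
  obtain ⟨u₀, hu₀₁, hu₀₂, hu₀⟩ := Nat.sInf_mem hT
  obtain ⟨v₀, hv₀, hle₀⟩ := hle u₀ ⟨hu₀₁, hu₀₂⟩
  calc distZ HX HZ ≤ wt v₀ := Nat.sInf_le ⟨v₀, hv₀.1, hv₀.2, rfl⟩
    _ ≤ wt u₀ := hle₀
    _ = distZ HX' HZ' := hu₀

lemma forall_add_add_eq_zero_iff {R : Type*} [Ring R] [CharP R 2] {Z x : ℕ → R} (h₀ : Z 0 = x 0)
    (n : ℕ) :
    (∀ r < n, Z r + x (r + 1) + Z (r + 1) = 0) ↔ ∀ k ≤ n, Z k = ∑ a ∈ range (k + 1), x a := by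
  induction n with
  | zero => simp [h₀]
  | succ n ih =>
    rw [Nat.forall_lt_succ_right, ih, CharTwo.add_eq_zero]
    constructor
    · rintro ⟨h, hn⟩ k hk
      rcases Nat.lt_or_eq_of_le hk with hk | rfl
      · exact h k (by omega)
      · rw [sum_range_succ, ← h n le_rfl, hn]
    · intro h
      refine ⟨fun k hk => h k (by omega), ?_⟩
      rw [h n (by omega), h (n + 1) le_rfl, sum_range_succ _ (n + 1)]

section Splitting

variable (HX : Matrix (Fin nX) (Fin N) (ZMod 2))
  (q : ∀ i : {i : Fin nX // 4 ≤ wt (HX i)}, Fin (wt (HX i.1)) → Fin N)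

abbrev HeavyRow : Type := {i : Fin nX // 4 ≤ wt (HX i)}

/-- The value of `v` at the paper's `q_{a+1}`, and `0` past the end of the support. -/
def supportSeq (v : Fin N → ZMod 2) (i : HeavyRow HX) (a : ℕ) : ZMod 2 :=
  if h : a < wt (HX i.1) then v (q i ⟨a, h⟩) else 0

def cutSeq (u : SplitQ HX → ZMod 2) (i : HeavyRow HX) (m : ℕ) : ZMod 2 :=
  if h : m < wt (HX i.1) - 3 then u (Sum.inr ⟨i, ⟨m, h⟩⟩) else 0

/-- The qubits `q₁, (1), …, (w−3), q_w` of a split row form a path, indexed here by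
`0, …, w−2`: the `r`-th new generator (counting from `0`) acts on its members `r` and `r+1`
and on `q_{r+2}`. -/
def chainSeq (u : SplitQ HX → ZMod 2) (i : HeavyRow HX) (k : ℕ) : ZMod 2 :=
  if k = 0 then supportSeq HX q (u ∘ Sum.inl) i 0
  else if k = wt (HX i.1) - 2 then supportSeq HX q (u ∘ Sum.inl) i (wt (HX i.1) - 1)
  else cutSeq HX u i (k - 1)

def extendByParity : (Fin N → ZMod 2) →ₗ[ZMod 2] (SplitQ HX → ZMod 2) where
  toFun v := Sum.elim v fun j => ∑ a ∈ range (j.2 + 2), supportSeq HX q v j.1 a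
  map_add' v v' := by
    funext j
    rcases j with p | ⟨i, m⟩
    · rfl
    · simp [supportSeq, ← sum_add_distrib, apply_dite₂]
  map_smul' c v := by
    funext j
    rcases j with p | ⟨i, m⟩
    · rfl
    · simp [supportSeq, mul_sum]

variable {HX q}

lemma extendByParity_apply_inl (v : Fin N → ZMod 2) (p : Fin N) :
    extendByParity HX q v (Sum.inl p) = v p := rfl

lemma extendByParity_apply_inr (v : Fin N → ZMod 2) (i : HeavyRow HX)
    (m : Fin (wt (HX i.1) - 3)) :
    extendByParity HX q v (Sum.inr ⟨i, m⟩) = ∑ a ∈ range (m + 2), supportSeq HX q v i a := rfl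

lemma splitHZ_eq_extendByParity (HZ : Matrix (Fin nZ) (Fin N) (ZMod 2)) (R : Fin nZ) :
    splitHZ HX HZ q R = extendByParity HX q (HZ R) := by
  funext j
  rcases j with p | ⟨i, m⟩
  · rfl
  · have hm := m.isLt
    rw [extendByParity_apply_inr,
      show range (m + 2) = (range (wt (HX i.1))).filter (· ≤ m.val + 1) by ext; simp only [mem_range, mem_filter]; omega,
      sum_filter, ← Fin.sum_univ_eq_sum_range]
    simp [splitHZ, supportSeq]

lemma sum_splitHX_inr_inl_mul (hinj : ∀ i, Function.Injective (q i)) (u : SplitQ HX → ZMod 2)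
    (i : HeavyRow HX) (r : Fin (wt (HX i.1) - 2)) :
    ∑ p, splitHX HX q (Sum.inr ⟨i, r⟩) (Sum.inl p) * u (Sum.inl p) =
      ∑ a ∈ (range (wt (HX i.1))).filter (fun a => (r.val = 0 ∧ (a = 0 ∨ a = 1)) ∨
        (1 ≤ r.val ∧ r.val ≤ wt (HX i.1) - 4 ∧ a = r.val + 1) ∨
        (r.val = wt (HX i.1) - 3 ∧ (a = wt (HX i.1) - 2 ∨ a = wt (HX i.1) - 1))),
        supportSeq HX q (u ∘ Sum.inl) i a := by
  rw [sum_filter, ← Fin.sum_univ_eq_sum_range]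
  refine (Fintype.sum_of_injective (q i) (hinj i) _ _ (fun p hp => ?_) (fun a => ?_)).symm
  · have : ∀ a, p ≠ q i a := fun a h => hp ⟨a, h.symm⟩
    simp [splitHX, this]
  · simp [splitHX, supportSeq, (hinj i).eq_iff, Fin.ext_iff]

lemma sum_splitHX_inr_inr_mul (u : SplitQ HX → ZMod 2) (i : HeavyRow HX)
    (r : Fin (wt (HX i.1) - 2)) :
    ∑ j, splitHX HX q (Sum.inr ⟨i, r⟩) (Sum.inr j) * u (Sum.inr j) =
      ∑ c ∈ (range (wt (HX i.1) - 3)).filter (fun c => c = r.val ∨ c + 1 = r.val),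
        cutSeq HX u i c := by
  rw [Fintype.sum_sigma, sum_eq_single i (fun i' _ hi' => by simp [splitHX, hi']) (by simp),
    sum_filter, ← Fin.sum_univ_eq_sum_range]
  simp [splitHX, cutSeq]

lemma splitHX_mulVec_inr (hinj : ∀ i, Function.Injective (q i)) (u : SplitQ HX → ZMod 2)
    (i : HeavyRow HX) (r : Fin (wt (HX i.1) - 2)) :
    (splitHX HX q *ᵥ u) (Sum.inr ⟨i, r⟩) = chainSeq HX q u i r
      + supportSeq HX q (u ∘ Sum.inl) i (r + 1) + chainSeq HX q u i (r + 1) := by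
  have hw : 4 ≤ wt (HX i.1) := i.2
  have hr := r.isLt
  rw [mulVec, dotProduct, Fintype.sum_sum_type, sum_splitHX_inr_inl_mul hinj,
    sum_splitHX_inr_inr_mul]
  rcases (show r.val = 0 ∨ r.val = wt (HX i.1) - 3 ∨ (1 ≤ r.val ∧ r.val ≤ wt (HX i.1) - 4) by
    omega) with h | h | h
  · calc _ = ∑ a ∈ {0, 1}, supportSeq HX q (u ∘ Sum.inl) i a + ∑ c ∈ {0}, cutSeq HX u i c := by
          congr 2 <;> ext <;> simp only [mem_filter, mem_range, mem_insert, mem_singleton] <;> omega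
      _ = _ := by
          rw [sum_pair zero_ne_one, sum_singleton]
          simp [chainSeq, h, show 1 ≠ wt (HX i.1) - 2 by omega]
  · calc _ = ∑ a ∈ {wt (HX i.1) - 2, wt (HX i.1) - 1}, supportSeq HX q (u ∘ Sum.inl) i a
          + ∑ c ∈ {wt (HX i.1) - 4}, cutSeq HX u i c := by
          congr 2 <;> ext <;> simp only [mem_filter, mem_range, mem_insert, mem_singleton] <;> omega
      _ = _ := by
          rw [sum_pair (by omega), sum_singleton]
          simp only [chainSeq, h, show wt (HX i.1) - 3 ≠ 0 by omega, ↓reduceIte,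
            show wt (HX i.1) - 3 ≠ wt (HX i.1) - 2 by omega, show wt (HX i.1) - 2 ≠ 0 by omega,
            show wt (HX i.1) - 3 + 1 = wt (HX i.1) - 2 by omega,
            show wt (HX i.1) - 3 - 1 = wt (HX i.1) - 4 by omega]
          abel
  · calc _ = ∑ a ∈ {r.val + 1}, supportSeq HX q (u ∘ Sum.inl) i a
          + ∑ c ∈ {r.val - 1, r.val}, cutSeq HX u i c := by
          congr 2 <;> ext <;> simp only [mem_filter, mem_range, mem_insert, mem_singleton] <;> omega
      _ = _ := by
          rw [sum_singleton, sum_pair (by omega)]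
          simp only [chainSeq, show r.val ≠ 0 by omega, show r.val ≠ wt (HX i.1) - 2 by omega,
            show r.val + 1 ≠ 0 by omega, show r.val + 1 ≠ wt (HX i.1) - 2 by omega, ↓reduceIte,
            add_tsub_cancel_right]
          abel

lemma splitHX_mulVec_inl (u : SplitQ HX → ZMod 2) (i : {i : Fin nX // ¬ 4 ≤ wt (HX i)}) :
    (splitHX HX q *ᵥ u) (Sum.inl i) = (HX *ᵥ (u ∘ Sum.inl)) i.1 := by
  simp [mulVec, dotProduct, Fintype.sum_sum_type, splitHX]

lemma mulVec_apply_heavyRow (hinj : ∀ i, Function.Injective (q i))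
    (hrange : ∀ i p, HX i.1 p ≠ 0 ↔ p ∈ Set.range (q i)) (v : Fin N → ZMod 2) (i : HeavyRow HX) :
    (HX *ᵥ v) i.1 = ∑ a ∈ range (wt (HX i.1)), supportSeq HX q v i a := by
  rw [mulVec, dotProduct, ← Fin.sum_univ_eq_sum_range]
  refine (Fintype.sum_of_injective (q i) (hinj i) _ _ (fun p hp => ?_) (fun a => ?_)).symm
  · simp [not_not.1 (mt (hrange i p).1 hp)]
  · have hone : ∀ x : ZMod 2, x ≠ 0 → x = 1 := by decide
    simp [supportSeq, hone _ ((hrange i (q i a)).2 ⟨a, rfl⟩)]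

lemma forall_splitHX_mulVec_inr_eq_zero_iff (hinj : ∀ i, Function.Injective (q i))
    (hrange : ∀ i p, HX i.1 p ≠ 0 ↔ p ∈ Set.range (q i)) (u : SplitQ HX → ZMod 2)
    (i : HeavyRow HX) :
    (∀ r, (splitHX HX q *ᵥ u) (Sum.inr ⟨i, r⟩) = 0) ↔ (HX *ᵥ (u ∘ Sum.inl)) i.1 = 0 ∧
      ∀ m : Fin (wt (HX i.1) - 3),
        u (Sum.inr ⟨i, m⟩) = ∑ a ∈ range (m + 2), supportSeq HX q (u ∘ Sum.inl) i a := by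
  have hw : 4 ≤ wt (HX i.1) := i.2
  simp only [splitHX_mulVec_inr hinj, Fin.forall_iff]
  have htot : ∑ a ∈ range (wt (HX i.1)), supportSeq HX q (u ∘ Sum.inl) i a =
      ∑ a ∈ range (wt (HX i.1) - 2 + 1), supportSeq HX q (u ∘ Sum.inl) i a
        + supportSeq HX q (u ∘ Sum.inl) i (wt (HX i.1) - 1) := by
    rw [show wt (HX i.1) - 1 = wt (HX i.1) - 2 + 1 by omega, ← sum_range_succ]
    congr 2
    omega
  rw [forall_add_add_eq_zero_iff (by simp [chainSeq]), mulVec_apply_heavyRow hinj hrange, htot,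
    CharTwo.add_eq_zero]
  constructor
  · intro h
    refine ⟨?_, fun m hm => ?_⟩
    · simpa [chainSeq, show wt (HX i.1) - 2 ≠ 0 by omega] using (h _ le_rfl).symm
    · simpa [chainSeq, cutSeq, hm, show m + 1 ≠ wt (HX i.1) - 2 by omega] using h (m + 1) (by omega)
  · rintro ⟨hlast, hcut⟩ k hk
    unfold chainSeq
    split_ifs with h₀ hk'
    · simp [h₀]
    · rw [hk', ← hlast]
    · have hk₁ : k - 1 < wt (HX i.1) - 3 := by omega
      simp [cutSeq, hk₁, hcut (k - 1) hk₁, show k - 1 + 2 = k + 1 by omega]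

theorem splitHX_mulVec_eq_zero_iff (hinj : ∀ i, Function.Injective (q i))
    (hrange : ∀ i p, HX i.1 p ≠ 0 ↔ p ∈ Set.range (q i)) (u : SplitQ HX → ZMod 2) :
    splitHX HX q *ᵥ u = 0 ↔ HX *ᵥ (u ∘ Sum.inl) = 0 ∧ u = extendByParity HX q (u ∘ Sum.inl) := by
  simp only [funext_iff, Sum.forall, Sigma.forall, Pi.zero_apply, splitHX_mulVec_inl,
    forall_splitHX_mulVec_inr_eq_zero_iff hinj hrange, extendByParity_apply_inl,
    extendByParity_apply_inr, Function.comp_apply, forall_and, implies_true, true_and,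
    Subtype.forall, ← and_assoc]
  rw [← forall_and]
  exact and_congr_left' (forall_congr' fun _ => and_comm.trans (Classical.imp_and_neg_imp_iff _))

end Splitting

theorem stmt5_general (HX : Matrix (Fin nX) (Fin N) (ZMod 2)) (HZ : Matrix (Fin nZ) (Fin N) (ZMod 2))
    (q : ∀ i : {i : Fin nX // 4 ≤ wt (HX i)}, Fin (wt (HX i.1)) → Fin N)
    (hinj : ∀ i, Function.Injective (q i))
    (hrange : ∀ i p, HX i.1 p ≠ 0 ↔ p ∈ Set.range (q i)) :
    distZ HX HZ ≤ distZ (splitHX HX q) (splitHZ HX HZ q) := by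
  have hHZ : splitHZ HX HZ q = extendByParity HX q ∘ HZ := funext (splitHZ_eq_extendByParity HZ)
  apply distZ_le_distZ_of_exists_le
  · rintro u ⟨hu, hspan⟩
    obtain ⟨hker, hext⟩ := (splitHX_mulVec_eq_zero_iff hinj hrange u).1 hu
    refine ⟨u ∘ Sum.inl, ⟨hker, fun hmem => hspan ?_⟩, wt_comp_le_of_injective Sum.inl_injective u⟩
    rw [hext, hHZ]
    exact apply_mem_span_range_comp _ hmem
  · rintro v ⟨hv, hspan⟩
    refine ⟨extendByParity HX q v, (splitHX_mulVec_eq_zero_iff hinj hrange _).2 ⟨hv, rfl⟩,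
      fun hmem => hspan ?_⟩
    have hres : LinearMap.funLeft (ZMod 2) (ZMod 2) Sum.inl ∘ splitHZ HX HZ q = HZ := by
      funext R p
      rfl
    have := apply_mem_span_range_comp (LinearMap.funLeft (ZMod 2) (ZMod 2) Sum.inl) hmem
    rwa [hres] at this

/-- If `K ≥ 1`, the full X-type generator splitting procedure does not
decrease the Z-distance: `d̃_Z ≥ d_Z`. -/
theorem stmt5 (HX : Matrix (Fin nX) (Fin N) (ZMod 2)) (HZ : Matrix (Fin nZ) (Fin N) (ZMod 2))
    (hCSS : HX * HZ.transpose = 0)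
    (q : ∀ i : {i : Fin nX // 4 ≤ wt (HX i)}, Fin (wt (HX i.1)) → Fin N)
    (hinj : ∀ i, Function.Injective (q i))
    (hrange : ∀ i p, HX i.1 p ≠ 0 ↔ p ∈ Set.range (q i))
    (hK : 1 ≤ N - HX.rank - HZ.rank) :
    distZ HX HZ ≤ distZ (splitHX HX q) (splitHZ HX HZ q) :=
  stmt5_general HX HZ q hinj hrange
end

section
/- Let C̃ be the thickened code of a CSS code C with parameter l ≥ 2 and choice function κ. Then for every row r of H_Z with supp(r) = {q₁,…,q_w} and every m ∈ {1,…,l}, the vector in F₂^Ñ whose support is {(q₁,m),…,(q_w,m)} lies in the row space of H̃_Z. Consequently, the row space of H̃_Z is the same for every choice function κ. -/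
open Matrix

variable {N nX nZ : ℕ}

/-- Qubits of the thickened code: qubits `(q,k)` for `q` a qubit of `C` and `k ∈ {1,…,l}`
(0-indexed below), together with qubits `[s,k]` for `s` a row of `H_X` and
`k ∈ {1,…,l−1}`. -/
abbrev TQubit (N nX l : ℕ) : Type := (Fin N × Fin l) ⊕ (Fin nX × Fin (l - 1))

/-- Row index type of the Z-type generator matrix of the thickened code: one generator for
each row of `H_Z` (type (i)), and one for each pair of a qubit `q` of `C` and
`k ∈ {1,…,l−1}` (type (ii)). -/
abbrev TZIdx (N nZ l : ℕ) : Type := Fin nZ ⊕ (Fin N × Fin (l - 1))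

/-- X-type generator matrix of the thickened code: for each row `s` of `HX` with support
`{q₁,…,q_w}` and each `k ∈ {1,…,l}` (0-indexed here), one generator with support
`{(q₁,k),…,(q_w,k)} ∪ {[s,k−1],[s,k]}` (with `[s,0]`, `[s,l]` omitted at the ends). -/
def thickHX (HX : Matrix (Fin nX) (Fin N) (ZMod 2)) (l : ℕ) :
    Matrix (Fin nX × Fin l) (TQubit N nX l) (ZMod 2) := fun s j =>
  match s, j with
  | (s, k), Sum.inl (p, k') => if k' = k then HX s p else 0
  | (s, k), Sum.inr (s', k') =>
      if s' = s ∧ ((k'.val = k.val) ∨ (k'.val + 1 = k.val)) then 1 else 0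

/-- Z-type generator matrix of the thickened code with choice function `κ`:
(i) for each row `r` of `HZ` with support `{q₁,…,q_w}`, one generator with support
`{(q₁,κ(r)),…,(q_w,κ(r))}`; (ii) for each qubit `q` of `C` and each `k ∈ {1,…,l−1}`
(0-indexed here), one generator with support
`{(q,k),(q,k+1)} ∪ {[s,k] : row s of HX acts on q}`. -/
def thickHZ (HX : Matrix (Fin nX) (Fin N) (ZMod 2)) (HZ : Matrix (Fin nZ) (Fin N) (ZMod 2))
    (l : ℕ) (κ : Fin nZ → Fin l) :
    Matrix (TZIdx N nZ l) (TQubit N nX l) (ZMod 2) := fun r j =>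
  match r, j with
  | Sum.inl R, Sum.inl (p, k) => if k = κ R then HZ R p else 0
  | Sum.inl _, Sum.inr _ => 0
  | Sum.inr (p, k), Sum.inl (p', k') =>
      if p' = p ∧ ((k'.val = k.val) ∨ (k'.val = k.val + 1)) then 1 else 0
  | Sum.inr (p, k), Sum.inr (s, k') => if k'.val = k.val then HX s p else 0

/-- The vector in `F₂^Ñ` whose support is `{(q₁,m),…,(q_w,m)}`, where `{q₁,…,q_w}` is the
support of the row `r` of `HZ`. -/
def unitZRow (HZ : Matrix (Fin nZ) (Fin N) (ZMod 2)) (nX l : ℕ) (r : Fin nZ) (m : Fin l) :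
    TQubit N nX l → ZMod 2 := fun j =>
  match j with
  | Sum.inl (p, k) => if k = m then HZ r p else 0
  | Sum.inr _ => 0

lemma self_add_self {M : Type*} [AddCommGroup M] [Module (ZMod 2) M] (x : M) :
    x + x = 0 := by
  have h : (2 : ZMod 2) • x = x + x := two_smul (ZMod 2) x
  have h2 : (2 : ZMod 2) = 0 := rfl
  rw [h2, zero_smul] at h
  exact h.symm

lemma thickHZ_inl (HX : Matrix (Fin nX) (Fin N) (ZMod 2))
    (HZ : Matrix (Fin nZ) (Fin N) (ZMod 2)) (l : ℕ) (κ : Fin nZ → Fin l) (r : Fin nZ) :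
    thickHZ HX HZ l κ (Sum.inl r) = unitZRow HZ nX l r (κ r) := by
  funext j
  rcases j with ⟨p, k⟩ | x <;> rfl

lemma pair_step (HX : Matrix (Fin nX) (Fin N) (ZMod 2))
    (HZ : Matrix (Fin nZ) (Fin N) (ZMod 2))
    (hCSS : HX * HZ.transpose = 0) (l : ℕ) (κ : Fin nZ → Fin l)
    (r : Fin nZ) (k : Fin (l - 1)) (h1 : (k : ℕ) < l) (h2 : (k : ℕ) + 1 < l) :
    unitZRow HZ nX l r ⟨k, h1⟩ + unitZRow HZ nX l r ⟨(k : ℕ) + 1, h2⟩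
      = ∑ p, HZ r p • thickHZ HX HZ l κ (Sum.inr (p, k)) := by
  funext j
  rcases j with ⟨p, k'⟩ | ⟨s, k''⟩
  · simp only [Pi.add_apply, unitZRow, Finset.sum_apply, Pi.smul_apply, thickHZ,
      smul_eq_mul, mul_ite, mul_one, mul_zero]
    by_cases hQ : ((k' : ℕ) = (k : ℕ) ∨ (k' : ℕ) = (k : ℕ) + 1)
    · simp only [hQ, and_true, Finset.sum_ite_eq, Finset.mem_univ, if_true]
      simp only [Fin.ext_iff]
      rcases hQ with h | h <;> split_ifs <;> simp_all
    · simp only [hQ, and_false, if_false, Finset.sum_const_zero]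
      simp only [Fin.ext_iff]
      split_ifs <;> simp_all
  · simp only [Pi.add_apply, unitZRow, Finset.sum_apply, Pi.smul_apply, thickHZ,
      smul_eq_mul, add_zero]
    split_ifs with h
    · have := congrFun (congrFun hCSS s) r
      simp only [Matrix.mul_apply, Matrix.transpose_apply, Matrix.zero_apply] at this
      rw [← this]
      exact Finset.sum_congr rfl fun p _ => mul_comm _ _
    · simp

lemma mem_aux (HX : Matrix (Fin nX) (Fin N) (ZMod 2))
    (HZ : Matrix (Fin nZ) (Fin N) (ZMod 2))
    (hCSS : HX * HZ.transpose = 0) (l : ℕ) (hl : 2 ≤ l) (κ : Fin nZ → Fin l)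
    (r : Fin nZ) (m : Fin l) :
    unitZRow HZ nX l r m ∈
      Submodule.span (ZMod 2) (Set.range (thickHZ HX HZ l κ)) := by
  set S := Submodule.span (ZMod 2) (Set.range (thickHZ HX HZ l κ)) with hS
  set e : Fin l → TQubit N nX l → ZMod 2 := unitZRow HZ nX l r with he
  have hstep : ∀ (k : ℕ) (h1 : k < l) (h2 : k + 1 < l),
      e ⟨k, h1⟩ + e ⟨k + 1, h2⟩ ∈ S := by
    intro k h1 h2
    have hk : k < l - 1 := by omega
    rw [he, pair_step HX HZ hCSS l κ r ⟨k, hk⟩ h1 h2]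
    exact Submodule.sum_mem _ fun p _ =>
      Submodule.smul_mem _ _ (Submodule.subset_span ⟨Sum.inr (p, ⟨k, hk⟩), rfl⟩)
  have h0 : (0 : ℕ) < l := by omega
  have hchain : ∀ (k : ℕ) (hk : k < l), e ⟨k, hk⟩ + e ⟨0, h0⟩ ∈ S := by
    intro k
    induction k with
    | zero => intro hk; rw [self_add_self]; exact Submodule.zero_mem _
    | succ n ih =>
      intro hk
      have hn : n < l := by omega
      have heq : e ⟨n + 1, hk⟩ + e ⟨0, h0⟩
          = (e ⟨n, hn⟩ + e ⟨0, h0⟩) + (e ⟨n, hn⟩ + e ⟨n + 1, hk⟩) := by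
        have : (e ⟨n, hn⟩ + e ⟨0, h0⟩) + (e ⟨n, hn⟩ + e ⟨n + 1, hk⟩)
            = (e ⟨n, hn⟩ + e ⟨n, hn⟩) + (e ⟨n + 1, hk⟩ + e ⟨0, h0⟩) := by abel
        rw [this, self_add_self, zero_add]
      rw [heq]
      exact Submodule.add_mem _ (ih hn) (hstep n hn hk)
  have hrow : e (κ r) ∈ S := Submodule.subset_span ⟨Sum.inl r, thickHZ_inl HX HZ l κ r⟩
  have h1 : e ⟨(m : ℕ), m.isLt⟩ + e ⟨0, h0⟩ ∈ S := hchain m m.isLt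
  have h2 : e ⟨((κ r : Fin l) : ℕ), (κ r).isLt⟩ + e ⟨0, h0⟩ ∈ S := hchain _ _
  rw [Fin.eta] at h1 h2
  have hsum : (e m + e ⟨0, h0⟩) + ((e (κ r) + e ⟨0, h0⟩) + e (κ r)) ∈ S :=
    Submodule.add_mem _ h1 (Submodule.add_mem _ h2 hrow)
  have heq : (e m + e ⟨0, h0⟩) + ((e (κ r) + e ⟨0, h0⟩) + e (κ r)) = e m := by
    funext j
    simp only [Pi.add_apply]
    have : ∀ a b c : ZMod 2, a + b + (c + b + c) = a := by decide
    exact this _ _ _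
  rwa [heq] at hsum

/-- In the thickened code with parameter `l ≥ 2` and choice function `κ`,
for every row `r` of `H_Z` with support `{q₁,…,q_w}` and every `m ∈ {1,…,l}`, the vector
supported on `{(q₁,m),…,(q_w,m)}` lies in the row space of `H̃_Z`.  Consequently the row
space of `H̃_Z` is the same for every choice function `κ`. -/
theorem stmt6 (HX : Matrix (Fin nX) (Fin N) (ZMod 2)) (HZ : Matrix (Fin nZ) (Fin N) (ZMod 2))
    (hCSS : HX * HZ.transpose = 0) (l : ℕ) (hl : 2 ≤ l) (κ : Fin nZ → Fin l) :
    (∀ (r : Fin nZ) (m : Fin l),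
      unitZRow HZ nX l r m ∈
        Submodule.span (ZMod 2) (Set.range (thickHZ HX HZ l κ))) ∧
    (∀ κ' : Fin nZ → Fin l,
      Submodule.span (ZMod 2) (Set.range (thickHZ HX HZ l κ))
        = Submodule.span (ZMod 2) (Set.range (thickHZ HX HZ l κ'))) := by
  refine ⟨mem_aux HX HZ hCSS l hl κ, fun κ' => ?_⟩
  have key : ∀ κ₁ κ₂ : Fin nZ → Fin l,
      Submodule.span (ZMod 2) (Set.range (thickHZ HX HZ l κ₁))
        ≤ Submodule.span (ZMod 2) (Set.range (thickHZ HX HZ l κ₂)) := by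
    intro κ₁ κ₂
    rw [Submodule.span_le]
    rintro _ ⟨i, rfl⟩
    rcases i with R | x
    · rw [thickHZ_inl]
      exact mem_aux HX HZ hCSS l hl κ₂ R (κ₁ R)
    · exact Submodule.subset_span ⟨Sum.inr x, by
        obtain ⟨p, k⟩ := x
        funext j
        rcases j with ⟨_, _⟩ | ⟨_, _⟩ <;> rfl⟩
  exact le_antisymm (key κ κ') (key κ' κ)
end

section
/- Let C̃ be the thickened code of a CSS code C with parameter l ≥ 2 and any choice function κ. Then the number of logical qubits is unchanged: K̃ = K, where K = N − rank(H_X) − rank(H_Z) and K̃ = Ñ − rank(H̃_X) − rank(H̃_Z). -/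
open Matrix

variable {N nX nZ : ℕ}

section StmtSevenAux

lemma sum_ite_const {α : Type*} [Fintype α] {P : Prop} [Decidable P] (g : α → ZMod 2) :
    (∑ x, if P then g x else 0) = if P then ∑ x, g x else 0 := by split <;> simp

lemma sum_fin_ite_val {n : ℕ} (m : ℕ) (f : Fin n → ZMod 2) :
    (∑ k : Fin n, if m = k.val then f k else 0) = if h : m < n then f ⟨m, h⟩ else 0 := by
  split
  · rename_i h
    rw [show (fun k : Fin n => if m = (k:ℕ) then f k else 0)
        = fun k : Fin n => if k = ⟨m, h⟩ then f k else 0 by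
      funext k; congr 1; simp [Fin.ext_iff, eq_comm]]
    simp [Finset.sum_ite_eq']
  · apply Finset.sum_eq_zero; intro k _
    rw [if_neg]; omega

lemma sum_fin_ite_val' {n : ℕ} (m : ℕ) (f : Fin n → ZMod 2) :
    (∑ k : Fin n, if m = k.val + 1 then f k else 0)
      = if h : m - 1 < n ∧ 1 ≤ m then f ⟨m - 1, h.1⟩ else 0 := by
  rcases m with _ | u
  · simp
  · rw [show (fun k : Fin n => if u + 1 = (k:ℕ) + 1 then f k else 0)
        = fun k : Fin n => if u = (k:ℕ) then f k else 0 by funext k; congr 1; simp]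
    rw [sum_fin_ite_val]
    split <;> split <;> simp_all <;> omega

lemma rank_add_ker {ι κ' : Type*} [Fintype ι] [Fintype κ'] (M : Matrix ι κ' (ZMod 2)) :
    M.rank + Module.finrank (ZMod 2) (LinearMap.ker Mᵀ.mulVecLin) = Fintype.card ι := by
  rw [← Matrix.rank_transpose M, Matrix.rank]
  rw [LinearMap.finrank_range_add_finrank_ker (Mᵀ.mulVecLin)]
  simp [Module.finrank_fintype_fun_eq_card]

lemma mulVecT_apply {ι κ' : Type*} [Fintype ι] (M : Matrix ι κ' (ZMod 2)) (v : ι → ZMod 2)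
    (j : κ') : Mᵀ.mulVec v j = ∑ i, M i j * v i := by
  simp [Matrix.mulVec, dotProduct, Matrix.transpose_apply]

lemma thickHX_col_inl (HX : Matrix (Fin nX) (Fin N) (ZMod 2)) {l : ℕ}
    (c : Fin nX × Fin l → ZMod 2) (p : Fin N) (k' : Fin l) :
    ((thickHX HX l)ᵀ.mulVec c) (Sum.inl (p, k')) = ∑ s, HX s p * c (s, k') := by
  rw [mulVecT_apply, Fintype.sum_prod_type]
  apply Finset.sum_congr rfl
  intro s _
  simp [thickHX, ite_mul, Finset.sum_ite_eq]

lemma thickHX_col_inr (HX : Matrix (Fin nX) (Fin N) (ZMod 2)) {l : ℕ} (hl : 2 ≤ l)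
    (c : Fin nX × Fin l → ZMod 2) (s' : Fin nX) (k' : Fin (l - 1)) :
    ((thickHX HX l)ᵀ.mulVec c) (Sum.inr (s', k'))
      = c (s', ⟨k'.val, by omega⟩) + c (s', ⟨k'.val + 1, by omega⟩) := by
  have hk := k'.isLt
  rw [mulVecT_apply, Fintype.sum_prod_type]
  have hpt : ∀ (s : Fin nX) (k : Fin l),
      thickHX HX l (s, k) (Sum.inr (s', k')) * c (s, k)
        = if s' = s then ((if (k':ℕ) = (k:ℕ) then c (s, k) else 0)
            + (if (k':ℕ) + 1 = (k:ℕ) then c (s, k) else 0)) else 0 := by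
    intro s k
    simp only [thickHX]
    split_ifs <;> first | omega | tauto | ring
  simp only [hpt]
  rw [show ∀ (g : Fin nX → Fin l → ZMod 2), (∑ s, ∑ k, if s' = s then g s k else 0)
      = ∑ s, if s' = s then ∑ k, g s k else 0 from fun g => by
    apply Finset.sum_congr rfl; intro s _; exact sum_ite_const _]
  rw [Finset.sum_ite_eq]
  simp only [Finset.mem_univ, if_pos, Finset.sum_add_distrib]
  rw [sum_fin_ite_val, sum_fin_ite_val]
  rw [dif_pos (by omega : (k':ℕ) < l), dif_pos (by omega : (k':ℕ) + 1 < l)]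

lemma constX (HX : Matrix (Fin nX) (Fin N) (ZMod 2)) {l : ℕ} (hl : 2 ≤ l)
    {c : Fin nX × Fin l → ZMod 2} (hc : (thickHX HX l)ᵀ.mulVecLin c = 0) (s : Fin nX) :
    ∀ j (hj : j < l), c (s, ⟨j, hj⟩) = c (s, ⟨0, by omega⟩) := by
  intro j
  induction j with
  | zero => intro _; rfl
  | succ u ih =>
    intro hj
    have hu : u < l - 1 := by omega
    have h0 := congrFun hc (Sum.inr (s, ⟨u, hu⟩))
    rw [Matrix.mulVecLin_apply, thickHX_col_inr HX hl] at h0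
    have h2 : ∀ a b : ZMod 2, a + b = 0 → b = a := by decide
    rw [h2 _ _ h0]
    exact ih (by omega)

noncomputable def eqvX (HX : Matrix (Fin nX) (Fin N) (ZMod 2)) {l : ℕ} (hl : 2 ≤ l) :
    LinearMap.ker (HXᵀ.mulVecLin) ≃ₗ[ZMod 2] LinearMap.ker ((thickHX HX l)ᵀ.mulVecLin) where
  toFun c := ⟨fun sk => c.1 sk.1, by
    rw [LinearMap.mem_ker]
    funext j
    rw [Matrix.mulVecLin_apply]
    rcases j with ⟨p, k'⟩ | ⟨s', k'⟩
    · rw [thickHX_col_inl]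
      have := congrFun c.2 p
      rw [Matrix.mulVecLin_apply, mulVecT_apply] at this
      simpa using this
    · rw [thickHX_col_inr HX hl]
      exact CharTwo.add_self_eq_zero _⟩
  map_add' c d := rfl
  map_smul' m c := rfl
  invFun c := ⟨fun s => c.1 (s, ⟨0, by omega⟩), by
    rw [LinearMap.mem_ker]
    funext p
    rw [Matrix.mulVecLin_apply, mulVecT_apply]
    have := congrFun c.2 (Sum.inl (p, ⟨0, by omega⟩))
    rw [Matrix.mulVecLin_apply, thickHX_col_inl] at this
    simpa using this⟩
  left_inv c := rfl
  right_inv c := by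
    apply Subtype.ext
    funext sk
    exact (constX HX hl c.2 sk.1 sk.2.val sk.2.isLt).symm

variable (HZ : Matrix (Fin nZ) (Fin N) (ZMod 2)) {l : ℕ} (κ : Fin nZ → Fin l)

def Efun (d : Fin nZ → ZMod 2) (t : ℕ) (p : Fin N) : ZMod 2 :=
  ∑ R, if (κ R).val ≤ t then d R * HZ R p else 0

def Ffun (d : Fin nZ → ZMod 2) (t : ℕ) (p : Fin N) : ZMod 2 :=
  ∑ R, if (κ R).val = t then d R * HZ R p else 0

lemma E_zero (d : Fin nZ → ZMod 2) (p : Fin N) : Efun HZ κ d 0 p = Ffun HZ κ d 0 p := by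
  apply Finset.sum_congr rfl; intro R _; simp [Nat.le_zero]

lemma E_succ (d : Fin nZ → ZMod 2) (t : ℕ) (p : Fin N) :
    Efun HZ κ d (t + 1) p = Efun HZ κ d t p + Ffun HZ κ d (t + 1) p := by
  rw [Efun, Efun, Ffun, ← Finset.sum_add_distrib]
  apply Finset.sum_congr rfl; intro R _
  split_ifs <;> first | omega | ring | simp_all

lemma E_full (d : Fin nZ → ZMod 2) (t : ℕ) (ht : l - 1 ≤ t) (p : Fin N) :
    Efun HZ κ d t p = ∑ R, d R * HZ R p := by
  apply Finset.sum_congr rfl; intro R _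
  rw [if_pos]; have := (κ R).isLt; omega

lemma thickHZ_col_inr (HX : Matrix (Fin nX) (Fin N) (ZMod 2))
    (v : TZIdx N nZ l → ZMod 2) (s : Fin nX) (k'' : Fin (l - 1)) :
    ((thickHZ HX HZ l κ)ᵀ.mulVec v) (Sum.inr (s, k''))
      = ∑ p, HX s p * v (Sum.inr (p, k'')) := by
  rw [mulVecT_apply, Fintype.sum_sum_type]
  have h1 : ∀ R : Fin nZ, thickHZ HX HZ l κ (Sum.inl R) (Sum.inr (s, k'')) * v (Sum.inl R)
      = 0 := by intro R; simp [thickHZ]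
  simp only [h1, Finset.sum_const_zero, zero_add, Fintype.sum_prod_type]
  apply Finset.sum_congr rfl; intro p _
  have h2 : ∀ k : Fin (l-1), ((k'' : ℕ) = (k : ℕ)) = (k = k'') := by
    intro k; simp [Fin.ext_iff, eq_comm]
  simp [thickHZ, h2, ite_mul, Finset.sum_ite_eq', mul_comm]

lemma thickHZ_col_inl (HX : Matrix (Fin nX) (Fin N) (ZMod 2)) (hl : 2 ≤ l)
    (v : TZIdx N nZ l → ZMod 2) (p' : Fin N) (k'' : Fin l) :
    ((thickHZ HX HZ l κ)ᵀ.mulVec v) (Sum.inl (p', k''))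
      = Ffun HZ κ (fun R => v (Sum.inl R)) k''.val p'
        + ((if h : (k'':ℕ) < l - 1 then v (Sum.inr (p', ⟨k''.val, h⟩)) else 0)
          + (if h : (k'':ℕ) - 1 < l - 1 ∧ 1 ≤ (k'':ℕ) then
              v (Sum.inr (p', ⟨(k'':ℕ) - 1, h.1⟩)) else 0)) := by
  rw [mulVecT_apply, Fintype.sum_sum_type]
  congr 1
  · rw [Ffun]
    apply Finset.sum_congr rfl; intro R _
    have : ((k'' = κ R)) = (((κ R):ℕ) = (k'':ℕ)) := by simp [Fin.ext_iff, eq_comm]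
    simp only [thickHZ, this]
    split_ifs <;> ring
  · have hpt : ∀ (p : Fin N) (k : Fin (l-1)),
        thickHZ HX HZ l κ (Sum.inr (p, k)) (Sum.inl (p', k'')) * v (Sum.inr (p, k))
          = if p' = p then ((if (k'':ℕ) = (k:ℕ) then v (Sum.inr (p, k)) else 0)
              + (if (k'':ℕ) = (k:ℕ) + 1 then v (Sum.inr (p, k)) else 0)) else 0 := by
      intro p k
      simp only [thickHZ]
      split_ifs <;> first | omega | tauto | ring
    rw [Fintype.sum_prod_type]
    simp only [hpt]
    rw [show ∀ (g : Fin N → Fin (l-1) → ZMod 2), (∑ p, ∑ k, if p' = p then g p k else 0)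
        = ∑ p, if p' = p then ∑ k, g p k else 0 from fun g => by
      apply Finset.sum_congr rfl; intro p _; exact sum_ite_const _]
    rw [Finset.sum_ite_eq]
    simp only [Finset.mem_univ, if_pos, Finset.sum_add_distrib]
    rw [sum_fin_ite_val, sum_fin_ite_val']

lemma Efun_add (d e : Fin nZ → ZMod 2) (t : ℕ) (p : Fin N) :
    Efun HZ κ (d + e) t p = Efun HZ κ d t p + Efun HZ κ e t p := by
  rw [Efun, Efun, Efun, ← Finset.sum_add_distrib]
  apply Finset.sum_congr rfl; intro R _
  split_ifs <;> simp [add_mul]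

lemma Efun_smul (m : ZMod 2) (d : Fin nZ → ZMod 2) (t : ℕ) (p : Fin N) :
    Efun HZ κ (m • d) t p = m * Efun HZ κ d t p := by
  rw [Efun, Efun, Finset.mul_sum]
  apply Finset.sum_congr rfl; intro R _
  split_ifs <;> simp [mul_assoc]

variable (HX : Matrix (Fin nX) (Fin N) (ZMod 2))

lemma css_inner (hCSS : HX * HZ.transpose = 0) (s : Fin nX) (R : Fin nZ) :
    ∑ p, HX s p * HZ R p = 0 := by
  have := congrFun (congrFun hCSS s) R
  simpa [Matrix.mul_apply, Matrix.transpose_apply] using this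

lemma fwdZ_mem (hCSS : HX * HZ.transpose = 0) (hl : 2 ≤ l) (d : Fin nZ → ZMod 2)
    (hd : HZᵀ.mulVecLin d = 0) :
    (thickHZ HX HZ l κ)ᵀ.mulVecLin
      (Sum.elim d (fun pk => Efun HZ κ d pk.2.val pk.1)) = 0 := by
  funext j
  rw [Matrix.mulVecLin_apply]
  rcases j with ⟨p', k''⟩ | ⟨s, k''⟩
  · rw [thickHZ_col_inl HZ κ HX hl]
    simp only [Sum.elim_inl, Sum.elim_inr]
    by_cases h1 : (k'':ℕ) < l - 1
    · rw [dif_pos h1]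
      rcases Nat.eq_zero_or_pos (k'':ℕ) with h0 | h0
      · rw [dif_neg (by omega), h0]
        rw [← E_zero]
        have : ∀ a : ZMod 2, a + (a + 0) = 0 := by decide
        exact this _
      · rw [dif_pos ⟨by omega, h0⟩]
        have hs : Efun HZ κ d (k'':ℕ) p' = Efun HZ κ d ((k'':ℕ) - 1) p'
            + Ffun HZ κ d (k'':ℕ) p' := by
          have := E_succ HZ κ d ((k'':ℕ) - 1) p'
          rwa [show (k'':ℕ) - 1 + 1 = (k'':ℕ) by omega] at this
        rw [hs]
        have : ∀ a b : ZMod 2, a + ((b + a) + b) = 0 := by decide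
        exact this _ _
    · rw [dif_neg h1, dif_pos ⟨by omega, by omega⟩]
      have hk : (k'':ℕ) = l - 1 := by have := k''.isLt; omega
      have hE : Efun HZ κ d ((k'':ℕ) - 1) p' + Ffun HZ κ d (k'':ℕ) p' = 0 := by
        have h2 := E_succ HZ κ d ((k'':ℕ) - 1) p'
        rw [show (k'':ℕ) - 1 + 1 = (k'':ℕ) by omega] at h2
        rw [← h2, E_full HZ κ d _ (by omega)]
        have hh := congrFun hd p'
        rw [Matrix.mulVecLin_apply, mulVecT_apply] at hh
        simp only [Pi.zero_apply] at hh
        rw [← hh]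
        apply Finset.sum_congr rfl; intro R _; ring
      have : ∀ a b : ZMod 2, b + a = 0 → a + (0 + b) = 0 := by decide
      exact this _ _ hE
  · rw [thickHZ_col_inr]
    simp only [Sum.elim_inr]
    have : ∀ p, HX s p * Efun HZ κ d (k'':ℕ) p
        = ∑ R, if (κ R).val ≤ (k'':ℕ) then d R * (HX s p * HZ R p) else 0 := by
      intro p
      rw [Efun, Finset.mul_sum]
      apply Finset.sum_congr rfl; intro R _
      split_ifs <;> ring_nf <;> simp
    simp only [this]
    rw [Finset.sum_comm]
    apply Finset.sum_eq_zero; intro R _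
    rw [sum_ite_const]
    split
    · rw [← Finset.mul_sum, css_inner HZ HX hCSS, mul_zero]
    · rfl

lemma bwdZ_claimA (hl : 2 ≤ l) (v : TZIdx N nZ l → ZMod 2)
    (hv : (thickHZ HX HZ l κ)ᵀ.mulVecLin v = 0) :
    ∀ j (hj : j < l - 1) (p : Fin N),
      v (Sum.inr (p, ⟨j, hj⟩)) = Efun HZ κ (fun R => v (Sum.inl R)) j p := by
  intro j
  induction j with
  | zero =>
    intro hj p
    have h0 := congrFun hv (Sum.inl (p, ⟨0, by omega⟩))
    rw [Matrix.mulVecLin_apply, thickHZ_col_inl HZ κ HX hl] at h0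
    rw [dif_pos (by simpa using hj), dif_neg (by simp)] at h0
    rw [E_zero]
    have : ∀ a b : ZMod 2, a + (b + 0) = 0 → b = a := by decide
    exact this _ _ h0
  | succ u ih =>
    intro hj p
    have h0 := congrFun hv (Sum.inl (p, ⟨u + 1, by omega⟩))
    rw [Matrix.mulVecLin_apply, thickHZ_col_inl HZ κ HX hl] at h0
    rw [dif_pos (by simpa using hj), dif_pos ⟨by simpa using Nat.lt_of_succ_lt hj, by simp⟩]
      at h0
    simp only [Nat.add_sub_cancel] at h0
    rw [ih (by omega) p] at h0
    rw [E_succ]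
    have : ∀ a b x : ZMod 2, a + (x + b) = 0 → x = b + a := by decide
    exact this _ _ _ h0

lemma bwdZ_claimB (hl : 2 ≤ l) (v : TZIdx N nZ l → ZMod 2)
    (hv : (thickHZ HX HZ l κ)ᵀ.mulVecLin v = 0) :
    HZᵀ.mulVecLin (fun R => v (Sum.inl R)) = 0 := by
  funext p
  rw [Matrix.mulVecLin_apply, mulVecT_apply]
  simp only [Pi.zero_apply]
  have h0 := congrFun hv (Sum.inl (p, ⟨l - 1, by omega⟩))
  rw [Matrix.mulVecLin_apply, thickHZ_col_inl HZ κ HX hl] at h0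
  rw [dif_neg (by simp), dif_pos ⟨by simp; omega, by simp; omega⟩] at h0
  rw [bwdZ_claimA HZ κ HX hl v hv _ _ p] at h0
  have h2 := E_succ HZ κ (fun R => v (Sum.inl R)) (l - 1 - 1) p
  rw [show l - 1 - 1 + 1 = l - 1 by omega] at h2
  rw [E_full HZ κ _ _ (le_refl _)] at h2
  have h3 : ∀ a b c : ZMod 2, a + (0 + b) = 0 → c = b + a → c = 0 := by decide
  have h4 := h3 _ _ _ h0 h2
  rw [← h4]
  apply Finset.sum_congr rfl; intro R _; ring

noncomputable def eqvZ (hCSS : HX * HZ.transpose = 0) (hl : 2 ≤ l) :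
    LinearMap.ker (HZᵀ.mulVecLin)
      ≃ₗ[ZMod 2] LinearMap.ker ((thickHZ HX HZ l κ)ᵀ.mulVecLin) where
  toFun d := ⟨Sum.elim d.1 (fun pk => Efun HZ κ d.1 pk.2.val pk.1),
    fwdZ_mem HZ κ HX hCSS hl d.1 d.2⟩
  map_add' d e := by
    apply Subtype.ext
    funext j
    rcases j with R | ⟨p, k⟩
    · rfl
    · simp [Efun_add]
  map_smul' m d := by
    apply Subtype.ext
    funext j
    rcases j with R | ⟨p, k⟩
    · rfl
    · simp [Efun_smul]
  invFun v := ⟨fun R => v.1 (Sum.inl R), bwdZ_claimB HZ κ HX hl v.1 v.2⟩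
  left_inv d := rfl
  right_inv v := by
    apply Subtype.ext
    funext j
    rcases j with R | ⟨p, k⟩
    · rfl
    · exact (bwdZ_claimA HZ κ HX hl v.1 v.2 k.val k.isLt p).symm

end StmtSevenAux

/-- Thickening a CSS code (with any `l ≥ 2` and any choice function `κ`)
does not change the number of logical qubits:
`K̃ = Ñ − rank(H̃_X) − rank(H̃_Z) = N − rank(H_X) − rank(H_Z) = K`. -/
theorem stmt7 (HX : Matrix (Fin nX) (Fin N) (ZMod 2)) (HZ : Matrix (Fin nZ) (Fin N) (ZMod 2))
    (hCSS : HX * HZ.transpose = 0) (l : ℕ) (hl : 2 ≤ l) (κ : Fin nZ → Fin l) :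
    Fintype.card (TQubit N nX l) - (thickHX HX l).rank - (thickHZ HX HZ l κ).rank
      = N - HX.rank - HZ.rank := by
  classical
  obtain ⟨m, rfl⟩ : ∃ m, l = m + 1 := ⟨l - 1, by omega⟩
  -- rank-nullity identities
  have e1 := rank_add_ker HX
  have e2 := rank_add_ker HZ
  have e3 := rank_add_ker (thickHX HX (m + 1))
  have e4 := rank_add_ker (thickHZ HX HZ (m + 1) κ)
  have hx := (eqvX HX hl).finrank_eq
  have hz := (eqvZ HZ κ HX hCSS hl).finrank_eq
  rw [hx] at e1
  rw [hz] at e2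
  simp only [Fintype.card_fin, Fintype.card_sum, Fintype.card_prod,
    Nat.add_sub_cancel] at e1 e2 e3 e4 ⊢
  -- the CSS bound : rank HX + rank HZ ≤ N
  have hle : LinearMap.range (HZᵀ.mulVecLin) ≤ LinearMap.ker (HX.mulVecLin) := by
    rintro x ⟨y, rfl⟩
    simp only [LinearMap.mem_ker, Matrix.mulVecLin_apply, Matrix.mulVec_mulVec, hCSS,
      Matrix.zero_mulVec]
  have h6 : HZ.rank ≤ Module.finrank (ZMod 2) (LinearMap.ker HX.mulVecLin) := by
    rw [← Matrix.rank_transpose HZ, Matrix.rank]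
    exact Submodule.finrank_mono hle
  have h7 := LinearMap.finrank_range_add_finrank_ker (HX.mulVecLin)
  rw [Module.finrank_fintype_fun_eq_card, Fintype.card_fin] at h7
  rw [← Matrix.rank] at h7
  have h5 : HX.rank + HZ.rank ≤ N := by omega
  -- arithmetic
  have p1 : N * (m + 1) = N * m + N := by ring
  have p2 : nX * (m + 1) = nX * m + nX := by ring
  rw [p1]
  rw [p2] at e3
  generalize hP : N * m = P at e4 ⊢
  generalize hQ : nX * m = Q at e3 ⊢
  omega
end

section
/- Let C be a CSS code with K ≥ 1 and let C̃ be its thickened code with parameter l ≥ 2 and any choice function κ. Then K̃ = K ≥ 1 and the X-distance satisfies exactly d̃_X = l·d_X. -/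
/-!
Restricting a vector of the thickened code to its bottom layer maps `ker H̃_Z` onto `ker H_Z`
(a vector `v` lifts to its copy on every layer) and pulls the row space of `H_X` back to the row
space of `H̃_X`, so it induces an isomorphism of the spaces of X-logicals and `K̃ = K`.
For `w ∈ ker H̃_Z`, the type (ii) generators force consecutive layers to differ by `c ᵥ* H_X`,
where `c` is the link layer between them; hence every layer of a nontrivial X-logical `w` is
itself a nontrivial X-logical of `C`, and `wt w ≥ l·d_X`. Copying a minimal logical of `C` onto
all `l` layers attains this bound.
-/

open Matrix

variable {N nX nZ : ℕ}

open Module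

section LinearAlgebra

variable {K M M' : Type*} [Field K] [AddCommGroup M] [Module K M] [AddCommGroup M'] [Module K M']
  [FiniteDimensional K M]

theorem Submodule.finrank_map_add_finrank_inf_ker (f : M →ₗ[K] M') (W : Submodule K M) :
    finrank K (W.map f) + finrank K ↥(W ⊓ LinearMap.ker f) = finrank K W := by
  rw [← LinearMap.range_domRestrict, ← Submodule.map_comap_subtype,
    Submodule.finrank_map_subtype_eq, ← LinearMap.ker_domRestrict]
  exact LinearMap.finrank_range_add_finrank_ker _

theorem Submodule.finrank_sub_finrank_eq_of_map_eq_of_inf_comap_eq [FiniteDimensional K M']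
    (π : M →ₗ[K] M') {W U : Submodule K M} {V T : Submodule K M'} (hTV : T ≤ V)
    (hmap : W.map π = V) (hcomap : W ⊓ T.comap π = U) :
    finrank K W - finrank K U = finrank K V - finrank K T := by
  have hW := (W.finrank_map_add_finrank_inf_ker (T.mkQ ∘ₗ π))
  have hV := V.finrank_map_add_finrank_inf_ker T.mkQ
  rw [LinearMap.ker_comp, Submodule.ker_mkQ, hcomap, Submodule.map_comp, hmap] at hW
  rw [Submodule.ker_mkQ, inf_of_le_right hTV] at hV
  omega

end LinearAlgebra

theorem Nat.sInf_eq_mul_sInf {A B : Set ℕ} (l : ℕ) (hAB : ∀ a ∈ A, l * a ∈ B)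
    (hBA : ∀ b ∈ B, A.Nonempty ∧ l * sInf A ≤ b) : sInf B = l * sInf A := by
  rcases A.eq_empty_or_nonempty with rfl | hA
  -- both sides are the junk value `sInf ∅ = 0`
  · have hB : B = ∅ := Set.eq_empty_of_forall_notMem fun b hb => (hBA b hb).1.ne_empty rfl
    simp [hB]
  · have hmem := hAB _ (Nat.sInf_mem hA)
    exact le_antisymm (Nat.sInf_le hmem) (hBA _ (Nat.sInf_mem ⟨_, hmem⟩)).2

theorem wt_eq_sum {α : Type*} [Fintype α] (v : α → ZMod 2) :
    wt v = ∑ j, if v j ≠ 0 then 1 else 0 :=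
  Finset.card_filter _ _

theorem wt_sum {α β : Type*} [Fintype α] [Fintype β] (v : α ⊕ β → ZMod 2) :
    wt v = wt (v ∘ Sum.inl) + wt (v ∘ Sum.inr) := by
  simp only [wt_eq_sum, Fintype.sum_sum_type, Function.comp_apply]

theorem wt_prod {α β : Type*} [Fintype α] [Fintype β] (v : α × β → ZMod 2) :
    wt v = ∑ b, wt fun a => v (a, b) := by
  simp only [wt_eq_sum, Fintype.sum_prod_type]
  exact Finset.sum_comm

theorem Matrix.mem_span_range_iff_exists_vecMul {m α : Type*} [Fintype m]
    (H : Matrix m α (ZMod 2)) (v : α → ZMod 2) :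
    v ∈ Submodule.span (ZMod 2) (Set.range H) ↔ ∃ c, c ᵥ* H = v := by
  rw [show Set.range H = Set.range H.row from rfl, ← range_vecMulLinear]
  rfl

theorem Matrix.span_range_le_ker_mulVecLin {m m' α : Type*} [Fintype m] [Fintype m'] [Fintype α]
    {HX : Matrix m α (ZMod 2)} {HZ : Matrix m' α (ZMod 2)} (hCSS : HX * HZ.transpose = 0) :
    Submodule.span (ZMod 2) (Set.range HX) ≤ LinearMap.ker HZ.mulVecLin := by
  rw [Submodule.span_le]
  rintro _ ⟨s, rfl⟩
  ext R
  simpa [Matrix.mul_apply, Matrix.mulVec, dotProduct, mul_comm] using congrFun₂ hCSS s R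

theorem Matrix.mulVec_vecMul_eq_zero {m m' α : Type*} [Fintype m] [Fintype m'] [Fintype α]
    {HX : Matrix m α (ZMod 2)} {HZ : Matrix m' α (ZMod 2)} (hCSS : HX * HZ.transpose = 0)
    (c : m → ZMod 2) : HZ *ᵥ (c ᵥ* HX) = 0 :=
  Matrix.span_range_le_ker_mulVecLin hCSS <| (HX.mem_span_range_iff_exists_vecMul _).2 ⟨c, rfl⟩

theorem Matrix.card_sub_rank_sub_rank {m m' α : Type*} [Fintype m] [Fintype m'] [Fintype α]
    (HX : Matrix m α (ZMod 2)) (HZ : Matrix m' α (ZMod 2)) :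
    Fintype.card α - HX.rank - HZ.rank = finrank (ZMod 2) (LinearMap.ker HZ.mulVecLin)
      - finrank (ZMod 2) (Submodule.span (ZMod 2) (Set.range HX)) := by
  have hX : HX.rank = finrank (ZMod 2) (Submodule.span (ZMod 2) (Set.range HX)) :=
    HX.rank_eq_finrank_span_row
  have hZ := LinearMap.finrank_range_add_finrank_ker HZ.mulVecLin
  rw [Module.finrank_fintype_fun_eq_card] at hZ
  rw [hX, Matrix.rank]
  omega

namespace Thickening

variable {l : ℕ}

def lowerLayer (k : Fin (l - 1)) : Fin l := ⟨k, by omega⟩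

def upperLayer (k : Fin (l - 1)) : Fin l := ⟨k + 1, by omega⟩

def layer (k : Fin l) : (TQubit N nX l → ZMod 2) →ₗ[ZMod 2] Fin N → ZMod 2 :=
  LinearMap.funLeft _ _ fun q => .inl (q, k)

def link (w : TQubit N nX l → ZMod 2) (k : Fin (l - 1)) : Fin nX → ZMod 2 :=
  fun s => w (.inr (s, k))

variable (HX : Matrix (Fin nX) (Fin N) (ZMod 2)) (HZ : Matrix (Fin nZ) (Fin N) (ZMod 2))
  (κ : Fin nZ → Fin l)

theorem layer_vecMul_thickHX (d : Fin nX × Fin l → ZMod 2) (k : Fin l) :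
    layer k (d ᵥ* thickHX HX l) = (fun s => d (s, k)) ᵥ* HX := by
  ext q
  simp only [layer, LinearMap.funLeft_apply, Matrix.vecMul, dotProduct,
    thickHX, Fintype.sum_prod_type]
  rw [Finset.sum_comm]
  simp [mul_ite]

theorem link_vecMul_thickHX (d : Fin nX × Fin l → ZMod 2) (k : Fin (l - 1)) :
    link (d ᵥ* thickHX HX l) k = fun s => d (s, lowerLayer k) + d (s, upperLayer k) := by
  ext s
  rw [link, Matrix.vecMul, dotProduct, Fintype.sum_eq_add (s, lowerLayer k) (s, upperLayer k)]
  · simp [thickHX, lowerLayer, upperLayer]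
  · simp [lowerLayer, upperLayer]
  · rintro ⟨s', k'⟩ ⟨h1, h2⟩
    have : ¬(s = s' ∧ (k.val = k'.val ∨ k.val + 1 = k'.val)) := by
      rintro ⟨rfl, h | h⟩
      · exact h1 (by simp [lowerLayer, h])
      · exact h2 (by simp [upperLayer, h])
    simp [thickHX, this]

theorem thickHZ_mulVec_apply_inl (w : TQubit N nX l → ZMod 2) (R : Fin nZ) :
    (thickHZ HX HZ l κ *ᵥ w) (.inl R) = (HZ *ᵥ layer (κ R) w) R := by
  simp [Matrix.mulVec, dotProduct, thickHZ, Fintype.sum_sum_type, Fintype.sum_prod_type, layer,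
    ite_mul]

theorem thickHZ_mulVec_apply_inr (w : TQubit N nX l → ZMod 2) (q : Fin N) (k : Fin (l - 1)) :
    (thickHZ HX HZ l κ *ᵥ w) (.inr (q, k))
      = layer (lowerLayer k) w q + layer (upperLayer k) w q + (link w k ᵥ* HX) q := by
  simp only [Matrix.mulVec, dotProduct, Fintype.sum_sum_type]
  congr 1
  · rw [Fintype.sum_eq_add (q, lowerLayer k) (q, upperLayer k)]
    · simp [thickHZ, lowerLayer, upperLayer, layer]
    · simp [lowerLayer, upperLayer]
    · rintro ⟨q', k'⟩ ⟨h1, h2⟩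
      have : ¬(q' = q ∧ (k'.val = k.val ∨ k'.val = k.val + 1)) := by
        rintro ⟨rfl, h | h⟩
        · exact h1 (by simp [lowerLayer, Fin.ext_iff, h])
        · exact h2 (by simp [upperLayer, Fin.ext_iff, h])
      simp [thickHZ, this]
  · simp [thickHZ, Fintype.sum_prod_type, link, Matrix.vecMul, dotProduct, Fin.val_inj, mul_comm]

theorem thickHZ_mulVec_eq_zero_iff (w : TQubit N nX l → ZMod 2) :
    thickHZ HX HZ l κ *ᵥ w = 0 ↔ (∀ R, (HZ *ᵥ layer (κ R) w) R = 0) ∧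
      ∀ k, layer (upperLayer k) w = layer (lowerLayer k) w + link w k ᵥ* HX := by
  constructor
  · intro hw
    refine ⟨fun R => by rw [← thickHZ_mulVec_apply_inl, hw]; rfl, fun k => ?_⟩
    ext q
    have := congrFun hw (.inr (q, k))
    rw [thickHZ_mulVec_apply_inr, Pi.zero_apply] at this
    simp only [Pi.add_apply]
    grind
  · rintro ⟨hR, hk⟩
    ext (R | ⟨q, k⟩)
    · rw [thickHZ_mulVec_apply_inl]
      exact hR R
    · rw [thickHZ_mulVec_apply_inr, hk]
      simp only [Pi.add_apply, Pi.zero_apply]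
      grind

theorem ext_layer_link {w w' : TQubit N nX l → ZMod 2} (hlayer : ∀ k, layer k w = layer k w')
    (hlink : ∀ k, link w k = link w' k) : w = w' := by
  ext (⟨q, k⟩ | ⟨s, k⟩)
  · exact congrFun (hlayer k) q
  · exact congrFun (hlink k) s

def linkSum (w : TQubit N nX l → ZMod 2) (k : Fin l) : Fin nX → ZMod 2 :=
  ∑ j with j.val < k.val, link w j

theorem linkSum_upperLayer (w : TQubit N nX l → ZMod 2) (k : Fin (l - 1)) :
    linkSum w (upperLayer k) = linkSum w (lowerLayer k) + link w k := by
  have hfilter : Finset.univ.filter (fun j : Fin (l - 1) => j.val < (upperLayer k).val)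
      = insert k (Finset.univ.filter fun j => j.val < (lowerLayer k).val) := by
    ext j
    simp [upperLayer, lowerLayer, le_iff_eq_or_lt, Fin.val_inj]
  rw [linkSum, hfilter, Finset.sum_insert (by simp [lowerLayer]), add_comm]
  rfl

theorem linkSum_zero [NeZero l] (w : TQubit N nX l → ZMod 2) : linkSum w 0 = 0 := by
  simp [linkSum]

theorem layer_eq_layer_zero_add [NeZero l] {w : TQubit N nX l → ZMod 2}
    (hw : thickHZ HX HZ l κ *ᵥ w = 0) (k : Fin l) :
    layer k w = layer 0 w + linkSum w k ᵥ* HX := by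
  have hstep := ((thickHZ_mulVec_eq_zero_iff HX HZ κ w).1 hw).2
  obtain ⟨i, hi⟩ := k
  induction i with
  | zero => simp [linkSum_zero]
  | succ i ih =>
    rw [show (⟨i + 1, hi⟩ : Fin l) = upperLayer ⟨i, by omega⟩ from rfl, hstep,
      linkSum_upperLayer, Matrix.add_vecMul, ← add_assoc]
    exact congrArg (· + _) (ih (by omega))

theorem mulVec_layer_eq_zero [NeZero l] (hCSS : HX * HZ.transpose = 0)
    {w : TQubit N nX l → ZMod 2} (hw : thickHZ HX HZ l κ *ᵥ w = 0) (k : Fin l) :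
    HZ *ᵥ layer k w = 0 := by
  have hconst : ∀ k, HZ *ᵥ layer k w = HZ *ᵥ layer 0 w := fun k => by
    rw [layer_eq_layer_zero_add HX HZ κ hw, Matrix.mulVec_add, Matrix.mulVec_vecMul_eq_zero hCSS,
      add_zero]
  ext R
  rw [hconst, ← hconst (κ R)]
  exact ((thickHZ_mulVec_eq_zero_iff HX HZ κ w).1 hw).1 R

theorem mem_span_thickHX_of_layer_zero_mem [NeZero l] {w : TQubit N nX l → ZMod 2}
    (hw : thickHZ HX HZ l κ *ᵥ w = 0)
    (h0 : layer 0 w ∈ Submodule.span (ZMod 2) (Set.range HX)) :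
    w ∈ Submodule.span (ZMod 2) (Set.range (thickHX HX l)) := by
  obtain ⟨c, hc⟩ := (HX.mem_span_range_iff_exists_vecMul _).1 h0
  refine ((thickHX HX l).mem_span_range_iff_exists_vecMul _).2
    ⟨fun p => c p.1 + linkSum w p.2 p.1, ext_layer_link (fun k => ?_) (fun k => ?_)⟩
  · rw [layer_vecMul_thickHX, layer_eq_layer_zero_add HX HZ κ hw, ← hc, ← Matrix.add_vecMul]
    rfl
  · rw [link_vecMul_thickHX]
    ext s
    simp only [linkSum_upperLayer, Pi.add_apply]
    grind

theorem thickHZ_mulVec_vecMul_thickHX (hCSS : HX * HZ.transpose = 0)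
    (d : Fin nX × Fin l → ZMod 2) :
    thickHZ HX HZ l κ *ᵥ (d ᵥ* thickHX HX l) = 0 := by
  refine (thickHZ_mulVec_eq_zero_iff HX HZ κ _).2 ⟨fun R => ?_, fun k => ?_⟩
  · rw [layer_vecMul_thickHX, Matrix.mulVec_vecMul_eq_zero hCSS]
    rfl
  · rw [layer_vecMul_thickHX, layer_vecMul_thickHX, link_vecMul_thickHX, ← Matrix.add_vecMul]
    congr 1
    ext s
    simp only [Pi.add_apply]
    grind

def thicken (v : Fin N → ZMod 2) : TQubit N nX l → ZMod 2 :=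
  Sum.elim (fun p => v p.1) 0

theorem layer_thicken (v : Fin N → ZMod 2) (k : Fin l) : layer k (thicken (nX := nX) v) = v :=
  rfl

theorem thickHZ_mulVec_thicken {v : Fin N → ZMod 2} (hv : HZ *ᵥ v = 0) :
    thickHZ HX HZ l κ *ᵥ thicken v = 0 := by
  refine (thickHZ_mulVec_eq_zero_iff HX HZ κ _).2 ⟨fun R => ?_, fun k => ?_⟩
  · rw [layer_thicken, hv]
    rfl
  · rw [layer_thicken, layer_thicken, show link (thicken v) k = 0 from rfl, Matrix.zero_vecMul,
      add_zero]

theorem wt_thicken (v : Fin N → ZMod 2) : wt (thicken (nX := nX) (l := l) v) = l * wt v := by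
  have hlinks : thicken (l := l) v ∘ Sum.inr = (0 : Fin nX × Fin (l - 1) → ZMod 2) := rfl
  rw [wt_sum, wt_prod, hlinks]
  simp only [thicken, Function.comp_apply, Sum.elim_inl]
  rw [Finset.sum_const, Finset.card_univ, Fintype.card_fin, smul_eq_mul]
  simp [wt]

theorem sum_wt_layer_le (w : TQubit N nX l → ZMod 2) : ∑ k, wt (layer k w) ≤ wt w := by
  rw [wt_sum w, wt_prod]
  exact Nat.le_add_right _ _

theorem map_layer_zero_ker [NeZero l] (hCSS : HX * HZ.transpose = 0) :
    (LinearMap.ker (thickHZ HX HZ l κ).mulVecLin).map (layer 0) = LinearMap.ker HZ.mulVecLin :=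
  le_antisymm (Submodule.map_le_iff_le_comap.2 fun _ hw => mulVec_layer_eq_zero HX HZ κ hCSS hw 0)
    fun v hv => ⟨thicken v, thickHZ_mulVec_thicken HX HZ κ hv, layer_thicken v 0⟩

theorem ker_inf_comap_layer_zero [NeZero l] (hCSS : HX * HZ.transpose = 0) :
    LinearMap.ker (thickHZ HX HZ l κ).mulVecLin
        ⊓ (Submodule.span (ZMod 2) (Set.range HX)).comap (layer 0)
      = Submodule.span (ZMod 2) (Set.range (thickHX HX l)) := by
  refine le_antisymm (fun w ⟨hw, h0⟩ => mem_span_thickHX_of_layer_zero_mem HX HZ κ hw h0)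
    fun w hw => ?_
  obtain ⟨d, rfl⟩ := ((thickHX HX l).mem_span_range_iff_exists_vecMul _).1 hw
  exact ⟨thickHZ_mulVec_vecMul_thickHX HX HZ κ hCSS d,
    (HX.mem_span_range_iff_exists_vecMul _).2 ⟨_, (layer_vecMul_thickHX HX d 0).symm⟩⟩

theorem layer_notMem_span [NeZero l] {w : TQubit N nX l → ZMod 2}
    (hw : thickHZ HX HZ l κ *ᵥ w = 0)
    (hwU : w ∉ Submodule.span (ZMod 2) (Set.range (thickHX HX l))) (k : Fin l) :
    layer k w ∉ Submodule.span (ZMod 2) (Set.range HX) := by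
  refine fun hk => hwU (mem_span_thickHX_of_layer_zero_mem HX HZ κ hw ?_)
  rw [eq_sub_of_add_eq (layer_eq_layer_zero_add HX HZ κ hw k).symm]
  exact Submodule.sub_mem _ hk ((HX.mem_span_range_iff_exists_vecMul _).2 ⟨_, rfl⟩)

end Thickening

open Thickening

theorem stmt8_general (HX : Matrix (Fin nX) (Fin N) (ZMod 2)) (HZ : Matrix (Fin nZ) (Fin N) (ZMod 2))
    (hCSS : HX * HZ.transpose = 0) (l : ℕ) (hl : 2 ≤ l) (κ : Fin nZ → Fin l) :
    (Fintype.card (TQubit N nX l) - (thickHX HX l).rank - (thickHZ HX HZ l κ).rank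
        = N - HX.rank - HZ.rank) ∧
    distX (thickHX HX l) (thickHZ HX HZ l κ) = l * distX HX HZ := by
  have : NeZero l := ⟨by omega⟩
  constructor
  · have hbase := Matrix.card_sub_rank_sub_rank HX HZ
    rw [Fintype.card_fin] at hbase
    rw [Matrix.card_sub_rank_sub_rank, hbase]
    exact Submodule.finrank_sub_finrank_eq_of_map_eq_of_inf_comap_eq (layer 0)
      (Matrix.span_range_le_ker_mulVecLin hCSS) (map_layer_zero_ker HX HZ κ hCSS)
      (ker_inf_comap_layer_zero HX HZ κ hCSS)
  · apply Nat.sInf_eq_mul_sInf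
    · rintro _ ⟨v, hv, hvT, rfl⟩
      refine ⟨thicken v, thickHZ_mulVec_thicken HX HZ κ hv, fun hw => hvT ?_, wt_thicken v⟩
      exact (ker_inf_comap_layer_zero HX HZ κ hCSS ▸ hw).2
    · rintro _ ⟨w, hw, hwU, rfl⟩
      have hlayer k : HZ *ᵥ layer k w = 0 ∧ layer k w ∉ Submodule.span (ZMod 2) (Set.range HX) :=
        ⟨mulVec_layer_eq_zero HX HZ κ hCSS hw k, layer_notMem_span HX HZ κ hw hwU k⟩
      refine ⟨⟨_, _, (hlayer 0).1, (hlayer 0).2, rfl⟩, ?_⟩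
      calc l * distX HX HZ = ∑ _k : Fin l, distX HX HZ := by simp
        _ ≤ ∑ k, wt (layer k w) :=
          Finset.sum_le_sum fun k _ => Nat.sInf_le ⟨_, (hlayer k).1, (hlayer k).2, rfl⟩
        _ ≤ wt w := sum_wt_layer_le w

/-- For a CSS code with `K ≥ 1` and its thickened code with parameter
`l ≥ 2` and any choice function `κ`: `K̃ = K ≥ 1` and `d̃_X = l·d_X` exactly. -/
theorem stmt8 (HX : Matrix (Fin nX) (Fin N) (ZMod 2)) (HZ : Matrix (Fin nZ) (Fin N) (ZMod 2))
    (hCSS : HX * HZ.transpose = 0) (l : ℕ) (hl : 2 ≤ l) (κ : Fin nZ → Fin l)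
    (hK : 1 ≤ N - HX.rank - HZ.rank) :
    (Fintype.card (TQubit N nX l) - (thickHX HX l).rank - (thickHZ HX HZ l κ).rank
        = N - HX.rank - HZ.rank) ∧
    distX (thickHX HX l) (thickHZ HX HZ l κ) = l * distX HX HZ :=
  stmt8_general HX HZ hCSS l hl κ
end

section
/- Let C be a CSS code and let w ≥ 1 and l be integers with l ≥ max(2, q_Z) satisfying 2·e·binom(q_Z, w+1)·(1/l)^{w+1}·min(q_Z·w_Z, N)·l ≤ 1, where e is Euler's number. Then there exists a choice function κ from the rows of H_Z to {1,…,l} such that the thickened code C̃ satisfies q̃_Z ≤ max(w+2, w_X), i.e., every column of H̃_Z has weight at most max(w+2, w_X). -/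
open Matrix

variable {N nX nZ : ℕ}

/-!
Colour each row `r` of `H_Z` by `κ r`. A column `(q,k)` of `H̃_Z` meets at most two generators
of type (ii), and the type-(i) generators of the rows `r ∋ q` with `κ r = k`; a column `[s,k]`
meets only type-(ii) generators, at most `w_X` of them. So it suffices that no column of `H_Z`
has more than `w` rows of one colour. For a uniformly random `κ` this fails at a given column
with probability at most `binom(q_Z, w+1) / l^w`, an event that depends only on the colours of
the rows meeting that column, hence is independent of all but at most `min(q_Z w_Z, N)` of the
others. With `D = min(q_Z w_Z, N)` and `D + 1 ≤ 2D`, the hypothesis is the symmetric Lovász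
local lemma condition `e · P(bad) · (D + 1) ≤ 1`, and the local lemma, in its counting form for
uniformly random maps, gives `κ`.
-/

open Finset

theorem exp_neg_one_le_one_sub_inv_pow (D : ℕ) :
    Real.exp (-1) ≤ (1 - ((D : ℝ) + 1)⁻¹) ^ D := by
  rcases D.eq_zero_or_pos with rfl | hD
  · simp [Real.exp_le_one_iff]
  have hD : (0 : ℝ) < D := by exact_mod_cast hD
  have hratio : 1 - ((D : ℝ) + 1)⁻¹ = D / (D + 1) := by field_simp; ring
  have hpos : 0 < (D : ℝ) / (D + 1) := by positivity
  rw [hratio, ← Real.exp_log hpos, ← Real.exp_nat_mul, Real.exp_le_exp]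
  have hlog := Real.one_sub_inv_le_log_of_pos hpos
  rw [inv_div, one_sub_div hD.ne', sub_add_cancel_left] at hlog
  calc (-1 : ℝ) = D * (-1 / D) := by field_simp
    _ ≤ D * Real.log (D / (D + 1)) := by gcongr

section LocalLemma

variable {ν V ι : Type*} [Fintype ν] [DecidableEq ν] [Fintype V] [DecidableEq V]
  [Fintype ι] [DecidableEq ι]

theorem card_inter_mul_card_eq_of_dependsOn {U W : Finset ν} (hUW : Disjoint U W)
    {A B : Finset (ν → V)} (hA : DependsOn (· ∈ A) (U : Set ν))
    (hB : DependsOn (· ∈ B) (W : Set ν)) :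
    #(A ∩ B) * Fintype.card (ν → V) = #A * #B := by
  rw [← card_univ, ← card_product, ← card_product]
  -- swapping the `U`-coordinates of a pair is an involution of `(ν → V) × (ν → V)`
  let swap : (ν → V) × (ν → V) → (ν → V) × (ν → V) :=
    fun x => (U.piecewise x.1 x.2, U.piecewise x.2 x.1)
  have swap_swap : ∀ x, swap (swap x) = x := fun x => by
    ext i <;> by_cases hi : i ∈ U <;> simp [swap, hi]
  have mem_iff : ∀ x, x ∈ (A ∩ B) ×ˢ univ ↔ swap x ∈ A ×ˢ B := fun x => by
    have hAx : x.1 ∈ A ↔ (swap x).1 ∈ A :=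
      propext_iff.mp (hA fun i (hi : i ∈ U) => by simp [swap, hi])
    have hBx : x.1 ∈ B ↔ (swap x).2 ∈ B :=
      propext_iff.mp (hB fun i (hi : i ∈ W) => by simp [swap, disjoint_right.mp hUW hi])
    simp [hAx, hBx]
  refine card_nbij' swap swap (fun x hx => (mem_iff x).mp hx) (fun x hx => ?_)
    (fun x _ => swap_swap x) (fun x _ => swap_swap x)
  exact (mem_iff (swap x)).mpr (by rwa [swap_swap])

def avoid (E : ι → Finset (ν → V)) (S : Finset ι) : Finset (ν → V) :=
  {f | ∀ j ∈ S, f ∉ E j}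

variable (E : ι → Finset (ν → V))

@[simp] theorem avoid_empty : avoid E ∅ = univ := by simp [avoid]

theorem avoid_insert (a : ι) (S : Finset ι) : avoid E (insert a S) = avoid E S \ E a := by
  ext f; simp [avoid, and_comm]

theorem avoid_anti {S T : Finset ι} (h : S ⊆ T) : avoid E T ⊆ avoid E S := by
  intro f; simp only [avoid, mem_filter, mem_univ, true_and]; exact fun hf j hj => hf j (h hj)

theorem cast_card_avoid_insert (a : ι) (S : Finset ι) :
    (#(avoid E (insert a S)) : ℝ) = #(avoid E S) - #(E a ∩ avoid E S) := by
  rw [avoid_insert, inter_comm, eq_sub_iff_add_eq]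
  exact_mod_cast card_sdiff_add_card_inter _ _

theorem dependsOn_mem_avoid {vbl : ι → Finset ν}
    (hdep : ∀ j, DependsOn (· ∈ E j) (vbl j : Set ν)) (S : Finset ι) :
    DependsOn (· ∈ avoid E S) (S.biUnion vbl : Set ν) := by
  intro f g hfg
  have h : ∀ j ∈ S, (f ∈ E j) = (g ∈ E j) := fun j hj =>
    hdep j fun i hi => hfg i (by simp only [coe_biUnion, Set.mem_iUnion]; exact ⟨j, hj, hi⟩)
  simp only [avoid, mem_filter, mem_univ, true_and, eq_iff_iff]
  exact forall₂_congr fun j hj => by rw [h j hj]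

theorem one_sub_pow_mul_card_avoid_le {x : ℝ} (hx : x ≤ 1) (S T : Finset ι)
    (h : ∀ a ∈ T, ∀ T' ⊆ T, a ∉ T' →
      (#(E a ∩ avoid E (S ∪ T')) : ℝ) ≤ x * #(avoid E (S ∪ T'))) :
    (1 - x) ^ #T * #(avoid E S) ≤ #(avoid E (S ∪ T)) := by
  induction T using Finset.induction_on with
  | empty => simp
  | insert a T haT ih =>
    have hT := ih fun b hb T' hT' => h b (mem_insert_of_mem hb) T' (hT'.trans (subset_insert _ _))
    have ha := h a (mem_insert_self a T) T (subset_insert _ _) haT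
    rw [card_insert_of_notMem haT, union_insert, cast_card_avoid_insert, pow_succ']
    calc (1 - x) * (1 - x) ^ #T * #(avoid E S)
        ≤ (1 - x) * #(avoid E (S ∪ T)) := by
          rw [mul_assoc]; exact mul_le_mul_of_nonneg_left hT (by linarith)
      _ ≤ _ := by linarith

theorem card_avoid_le_exp_mul_card_avoid_union {D : ℕ} (S T : Finset ι) (hT : #T ≤ D)
    (h : ∀ a ∈ T, ∀ T' ⊆ T, a ∉ T' →
      (#(E a ∩ avoid E (S ∪ T')) : ℝ) ≤ ((D : ℝ) + 1)⁻¹ * #(avoid E (S ∪ T'))) :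
    (#(avoid E S) : ℝ) ≤ Real.exp 1 * #(avoid E (S ∪ T)) := by
  have hx : 0 ≤ 1 - ((D : ℝ) + 1)⁻¹ := sub_nonneg.mpr (inv_le_one_of_one_le₀ (by simp))
  have hpow : Real.exp (-1) ≤ (1 - ((D : ℝ) + 1)⁻¹) ^ #T :=
    (exp_neg_one_le_one_sub_inv_pow D).trans
      (pow_le_pow_of_le_one hx (sub_le_self _ (by positivity)) hT)
  rw [← inv_mul_le_iff₀ (Real.exp_pos 1), ← Real.exp_neg]
  exact (mul_le_mul_of_nonneg_right hpow (Nat.cast_nonneg _)).trans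
    (one_sub_pow_mul_card_avoid_le E (inv_le_one_of_one_le₀ (by simp)) S T h)

variable {E} {vbl : ι → Finset ν} {D : ℕ}

/-- The counting form of `P(E j | no event of S occurs) ≤ 1 / (D + 1)`. -/
theorem card_inter_avoid_le [Nonempty V] (hdep : ∀ j, DependsOn (· ∈ E j) (vbl j : Set ν))
    (hdeg : ∀ j, #{i | i ≠ j ∧ ¬Disjoint (vbl i) (vbl j)} ≤ D)
    (hE : ∀ j, Real.exp 1 * (D + 1) * #(E j) ≤ Fintype.card (ν → V)) (S : Finset ι) :
    ∀ j ∉ S, (#(E j ∩ avoid E S) : ℝ) ≤ ((D : ℝ) + 1)⁻¹ * #(avoid E S) := by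
  induction S using Finset.strongInduction with | H S ih => ?_
  intro j hj
  set S₁ := {i ∈ S | ¬Disjoint (vbl i) (vbl j)}
  set S₂ := {i ∈ S | Disjoint (vbl i) (vbl j)}
  have hS : S₂ ∪ S₁ = S := filter_union_filter_not_eq _ S
  have hS₁ : #S₁ ≤ D := (card_le_card fun i hi => by
    simp only [S₁, mem_filter] at hi
    simpa using ⟨fun h => hj (h ▸ hi.1), hi.2⟩).trans (hdeg j)
  have hchain : (#(avoid E S₂) : ℝ) ≤ Real.exp 1 * #(avoid E S) :=
    hS ▸ card_avoid_le_exp_mul_card_avoid_union E S₂ S₁ hS₁ fun a ha T' hT' haT' => by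
      have ha' : a ∉ S₂ ∪ T' := by
        simp only [S₁, S₂, mem_union, mem_filter] at ha ⊢; tauto
      have hsub : S₂ ∪ T' ⊆ S := hS ▸ union_subset_union (subset_refl _) hT'
      exact ih _ ((ssubset_iff_of_subset hsub).mpr ⟨a, hS ▸ mem_union_right _ ha, ha'⟩) a ha'
  have hindep :
      (#(E j ∩ avoid E S₂) : ℝ) * Fintype.card (ν → V) = #(E j) * #(avoid E S₂) := by
    have hdisj : Disjoint (vbl j) (S₂.biUnion vbl) :=
      (disjoint_biUnion_right _ _ _).mpr fun i hi => (mem_filter.mp hi).2.symm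
    exact_mod_cast
      card_inter_mul_card_eq_of_dependsOn hdisj (hdep j) (dependsOn_mem_avoid E hdep S₂)
  have hmono : #(E j ∩ avoid E S) ≤ #(E j ∩ avoid E S₂) :=
    card_le_card (inter_subset_inter_left (avoid_anti E (hS ▸ subset_union_left)))
  have hΩ : (0 : ℝ) < Fintype.card (ν → V) := by exact_mod_cast Fintype.card_pos
  rw [inv_mul_eq_div, le_div_iff₀ (by positivity),
    ← mul_le_mul_iff_right₀ (mul_pos (Real.exp_pos 1) hΩ)]
  calc Real.exp 1 * Fintype.card (ν → V) * (#(E j ∩ avoid E S) * ((D : ℝ) + 1))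
      ≤ Real.exp 1 * Fintype.card (ν → V) * (#(E j ∩ avoid E S₂) * ((D : ℝ) + 1)) := by
        gcongr
    _ = Real.exp 1 * (D + 1) * #(E j) * #(avoid E S₂) := by
        linear_combination (Real.exp 1 * ((D : ℝ) + 1)) * hindep
    _ ≤ Fintype.card (ν → V) * (Real.exp 1 * #(avoid E S)) := by gcongr; exact hE j
    _ = Real.exp 1 * Fintype.card (ν → V) * #(avoid E S) := by ring

theorem symmetric_lovasz_local_lemma [Nonempty V]
    (hdep : ∀ j, DependsOn (· ∈ E j) (vbl j : Set ν)) (hD : 1 ≤ D)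
    (hdeg : ∀ j, #{i | i ≠ j ∧ ¬Disjoint (vbl i) (vbl j)} ≤ D)
    (hE : ∀ j, Real.exp 1 * (D + 1) * #(E j) ≤ Fintype.card (ν → V)) :
    ∃ f : ν → V, ∀ j, f ∉ E j := by
  have hchain := one_sub_pow_mul_card_avoid_le E (x := ((D : ℝ) + 1)⁻¹)
    (inv_le_one_of_one_le₀ (by simp)) ∅ univ fun a _ T' _ haT' =>
      card_inter_avoid_le hdep hdeg hE (∅ ∪ T') a (by simpa using haT')
  have hx : 0 < 1 - ((D : ℝ) + 1)⁻¹ :=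
    sub_pos.mpr (inv_lt_one_of_one_lt₀ (by norm_cast; omega))
  have hpos : 0 < #(avoid E univ) := by
    rw [avoid_empty, empty_union, card_univ] at hchain
    exact_mod_cast (mul_pos (pow_pos hx _) (by exact_mod_cast Fintype.card_pos)).trans_le hchain
  obtain ⟨f, hf⟩ := card_pos.mp hpos
  exact ⟨f, fun j => (mem_filter.mp hf).2 j (mem_univ j)⟩

end LocalLemma

section Coloring

variable {m α : Type*} [Fintype m] (H : Matrix m α (ZMod 2))

def colSupp (p : α) : Finset m := {R | H R p ≠ 0}

theorem card_colSupp_le [Fintype α] (p : α) : #(colSupp H p) ≤ maxColW H :=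
  le_sup (f := fun j => wt fun i => H i j) (mem_univ p)

theorem wt_row_le_maxRowW [Fintype α] (R : m) : wt (H R) ≤ maxRowW H :=
  le_sup (f := fun i => wt (H i)) (mem_univ R)

theorem pos_min_of_pos_maxColW [Fintype α] (h : 0 < maxColW H) :
    0 < min (maxColW H * maxRowW H) (Fintype.card α) := by
  obtain ⟨p, -, hp⟩ := Finset.lt_sup_iff.mp h
  obtain ⟨R, hR⟩ := card_pos.mp hp
  have hRp : H R p ≠ 0 := (mem_filter.mp hR).2
  have hrow : 0 < maxRowW H :=
    (card_pos.mpr ⟨p, mem_filter.mpr ⟨mem_univ p, hRp⟩⟩).trans_le (wt_row_le_maxRowW H R)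
  have hα : 0 < Fintype.card α := Fintype.card_pos_iff.mpr ⟨p⟩
  exact lt_min (Nat.mul_pos h hrow) hα

theorem card_not_disjoint_colSupp_le [Fintype α] [DecidableEq m] [DecidableEq α] (p : α) :
    #{p' | ¬Disjoint (colSupp H p') (colSupp H p)}
      ≤ min (maxColW H * maxRowW H) (Fintype.card α) := by
  refine le_min ?_ (card_le_univ _)
  have hsub : ({p' | ¬Disjoint (colSupp H p') (colSupp H p)} : Finset α)
      ⊆ (colSupp H p).biUnion fun R => {p' | H R p' ≠ 0} := by
    intro p' hp'
    obtain ⟨R, hR', hR⟩ := not_disjoint_iff.mp (mem_filter.mp hp').2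
    exact mem_biUnion.mpr ⟨R, hR, mem_filter.mpr ⟨mem_univ _, (mem_filter.mp hR').2⟩⟩
  refine (card_le_card hsub).trans ((card_biUnion_le_card_mul _ _ _ fun R _ =>
    wt_row_le_maxRowW H R).trans ?_)
  exact Nat.mul_le_mul_right _ (card_colSupp_le H p)

def overloaded {V : Type*} [DecidableEq m] [Fintype V] [DecidableEq V] (w : ℕ) (p : α) :
    Finset (m → V) :=
  {κ | ∃ k, w < #{R ∈ colSupp H p | κ R = k}}

theorem dependsOn_mem_overloaded {V : Type*} [DecidableEq m] [Fintype V] [DecidableEq V]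
    (w : ℕ) (p : α) :
    DependsOn (· ∈ overloaded (V := V) H w p) (colSupp H p : Set m) := by
  intro f g hfg
  have h : ∀ k, {R ∈ colSupp H p | f R = k} = {R ∈ colSupp H p | g R = k} :=
    fun k => filter_congr fun R hR => by rw [hfg R hR]
  simp only [overloaded, mem_filter, mem_univ, true_and, h]

theorem card_piFinset_ite_mul_pow {V : Type*} [DecidableEq m] [Fintype V] [DecidableEq V]
    (T : Finset m) (c : V) :
    #(Fintype.piFinset fun i => if i ∈ T then {c} else univ) * Fintype.card V ^ #T
      = Fintype.card V ^ Fintype.card m := by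
  rw [Fintype.card_piFinset, ← card_compl_add_card T, pow_add]
  simp [apply_ite card, prod_ite, filter_notMem_eq_sdiff, compl_eq_univ_sdiff]

theorem card_overloaded_mul_pow_le [Fintype α] {V : Type*} [DecidableEq m] [Fintype V]
    [DecidableEq V] [Nonempty V] (w : ℕ) (p : α) :
    #(overloaded (V := V) H w p) * Fintype.card V ^ w
      ≤ (maxColW H).choose (w + 1) * Fintype.card V ^ Fintype.card m := by
  set constOn : Finset m → V → Finset (m → V) :=
    fun T c => Fintype.piFinset fun i => if i ∈ T then {c} else univ
  -- an overloaded colouring is constant on some `w + 1` rows meeting column `p`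
  have hsub : overloaded H w p ⊆
      ((colSupp H p).powersetCard (w + 1)).biUnion fun T => univ.biUnion (constOn T) := by
    intro κ hκ
    obtain ⟨k, hk⟩ := (mem_filter.mp hκ).2
    obtain ⟨T, hT, hTcard⟩ := exists_subset_card_eq hk
    refine mem_biUnion.mpr ⟨T, mem_powersetCard.mpr ⟨hT.trans (filter_subset _ _), hTcard⟩,
      mem_biUnion.mpr ⟨k, mem_univ k, Fintype.mem_piFinset.mpr fun i => ?_⟩⟩
    split_ifs with hi
    · exact mem_singleton.mpr (mem_filter.mp (hT hi)).2
    · exact mem_univ _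
  have hT : ∀ T ∈ (colSupp H p).powersetCard (w + 1),
      #(univ.biUnion (constOn T)) * Fintype.card V ^ (w + 1)
        ≤ Fintype.card V * Fintype.card V ^ Fintype.card m := fun T hT => by
    rw [← (mem_powersetCard.mp hT).2]
    calc #(univ.biUnion (constOn T)) * Fintype.card V ^ #T
        ≤ ∑ c, #(constOn T c) * Fintype.card V ^ #T := by
          rw [← sum_mul]; exact Nat.mul_le_mul_right _ card_biUnion_le
      _ = _ := by simp only [constOn, card_piFinset_ite_mul_pow, sum_const, card_univ, smul_eq_mul]
  have hV : 0 < Fintype.card V := Fintype.card_pos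
  refine Nat.le_of_mul_le_mul_right ?_ hV
  calc #(overloaded H w p) * Fintype.card V ^ w * Fintype.card V
      ≤ ∑ T ∈ (colSupp H p).powersetCard (w + 1),
          #(univ.biUnion (constOn T)) * Fintype.card V ^ (w + 1) := by
        rw [mul_assoc, ← pow_succ, ← sum_mul]
        exact Nat.mul_le_mul_right _ ((card_le_card hsub).trans card_biUnion_le)
    _ ≤ (#(colSupp H p)).choose (w + 1) * (Fintype.card V * Fintype.card V ^ Fintype.card m) := by
        rw [← card_powersetCard]; exact sum_le_card_nsmul _ _ _ hT
    _ ≤ (maxColW H).choose (w + 1) * (Fintype.card V * Fintype.card V ^ Fintype.card m) := by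
        gcongr; exact card_colSupp_le H p
    _ = _ := by ring

theorem exists_coloring_card_colSupp_le [Fintype α] [DecidableEq m] [DecidableEq α]
    {V : Type*} [Fintype V] [DecidableEq V] [Nonempty V] (w : ℕ)
    (h : 2 * Real.exp 1 * (maxColW H).choose (w + 1) *
      min (maxColW H * maxRowW H) (Fintype.card α) ≤ (Fintype.card V : ℝ) ^ w) :
    ∃ κ : m → V, ∀ p k, #{R ∈ colSupp H p | κ R = k} ≤ w := by
  by_cases hq : maxColW H ≤ w
  · exact ⟨fun _ => Classical.arbitrary V, fun p k =>
      ((card_filter_le _ _).trans (card_colSupp_le H p)).trans hq⟩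
  set M := min (maxColW H * maxRowW H) (Fintype.card α)
  have hM : 1 ≤ M := pos_min_of_pos_maxColW H (by omega)
  have hE : ∀ p, Real.exp 1 * (M + 1) * #(overloaded (V := V) H w p)
      ≤ Fintype.card (m → V) := fun p => by
    have hcount : (#(overloaded (V := V) H w p) : ℝ) * Fintype.card V ^ w
        ≤ (maxColW H).choose (w + 1) * Fintype.card V ^ Fintype.card m := by
      exact_mod_cast card_overloaded_mul_pow_le H w p
    have hM2 : (M : ℝ) + 1 ≤ 2 * M := by norm_cast; omega
    rw [Fintype.card_fun, Nat.cast_pow, ← mul_le_mul_iff_left₀ (pow_pos (Nat.cast_pos.mpr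
      (Fintype.card_pos (α := V))) w)]
    calc Real.exp 1 * (M + 1) * #(overloaded H w p) * Fintype.card V ^ w
        ≤ Real.exp 1 * (2 * M) *
            ((maxColW H).choose (w + 1) * Fintype.card V ^ Fintype.card m) := by
          rw [mul_assoc]; gcongr
      _ = 2 * Real.exp 1 * (maxColW H).choose (w + 1) * M * Fintype.card V ^ Fintype.card m := by
          ring
      _ ≤ _ := by rw [mul_comm (_ ^ Fintype.card m)]; gcongr
  obtain ⟨κ, hκ⟩ := symmetric_lovasz_local_lemma (dependsOn_mem_overloaded H w) hM
    (fun p => (card_le_card (monotone_filter_right _ fun _ _ => And.right)).trans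
      (card_not_disjoint_colSupp_le H p)) hE
  exact ⟨κ, fun p k => not_lt.mp fun hk => hκ p (mem_filter.mpr ⟨mem_univ _, k, hk⟩)⟩

end Coloring

theorem wt_sum_type {A B : Type*} [Fintype A] [Fintype B] (v : A ⊕ B → ZMod 2) :
    wt v = wt (v ∘ Sum.inl) + wt (v ∘ Sum.inr) := by
  simp only [wt, card_filter, Fintype.sum_sum_type, Function.comp]

section Thickening

variable (HX : Matrix (Fin nX) (Fin N) (ZMod 2)) (HZ : Matrix (Fin nZ) (Fin N) (ZMod 2))
  {l : ℕ} (κ : Fin nZ → Fin l)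

theorem wt_thickHZ_col_inl (p : Fin N) (k : Fin l) :
    wt (fun r => thickHZ HX HZ l κ r (Sum.inl (p, k)))
      ≤ #{R ∈ colSupp HZ p | κ R = k} + 2 := by
  rw [wt_sum_type]
  refine add_le_add (le_of_eq (congrArg card ?_)) ?_
  · ext R
    by_cases h : k = κ R <;> simp [thickHZ, colSupp, h, eq_comm]
  · unfold wt
    refine (card_le_card_of_injOn (fun x => x.2.val) (t := {k.val, k.val - 1}) ?_ ?_).trans
      card_le_two
    · intro x hx
      simp only [coe_filter, mem_univ, true_and, Set.mem_ofPred_eq, Function.comp_apply, thickHZ,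
        ite_ne_right_iff] at hx
      simp only [coe_insert, coe_singleton, Set.mem_insert_iff, Set.mem_singleton_iff]
      omega
    · intro x hx y hy hxy
      simp only [coe_filter, mem_univ, true_and, Set.mem_ofPred_eq, Function.comp_apply, thickHZ,
        ite_ne_right_iff] at hx hy
      exact Prod.ext (hx.1.1.symm.trans hy.1.1) (Fin.ext hxy)

theorem wt_thickHZ_col_inr (s : Fin nX) (k : Fin (l - 1)) :
    wt (fun r => thickHZ HX HZ l κ r (Sum.inr (s, k))) ≤ maxRowW HX := by
  rw [wt_sum_type]
  have hinl : wt ((fun r => thickHZ HX HZ l κ r (Sum.inr (s, k))) ∘ Sum.inl) = 0 := by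
    simp [wt, thickHZ]
  rw [hinl, zero_add]
  refine (card_le_card_of_injOn Prod.fst (t := {p | HX s p ≠ 0}) ?_ ?_).trans
    (wt_row_le_maxRowW HX s)
  · intro x hx
    simp only [coe_filter, mem_univ, true_and, Set.mem_ofPred_eq, Function.comp_apply, thickHZ,
      ite_ne_right_iff] at hx
    simp [hx.2]
  · intro x hx y hy hxy
    simp only [coe_filter, mem_univ, true_and, Set.mem_ofPred_eq, Function.comp_apply, thickHZ,
      ite_ne_right_iff] at hx hy
    exact Prod.ext hxy (Fin.ext (hx.1.symm.trans hy.1))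

theorem wt_thickHZ_col_le {w : ℕ} (hκ : ∀ p k, #{R ∈ colSupp HZ p | κ R = k} ≤ w) :
    ∀ q : TQubit N nX l, wt (fun r => thickHZ HX HZ l κ r q) ≤ max (w + 2) (maxRowW HX)
  | Sum.inl (p, k) =>
    ((wt_thickHZ_col_inl HX HZ κ p k).trans (Nat.add_le_add_right (hκ p k) 2)).trans
      (le_max_left _ _)
  | Sum.inr (s, k) => (wt_thickHZ_col_inr HX HZ κ s k).trans (le_max_right _ _)

end Thickening

theorem stmt11_general (HX : Matrix (Fin nX) (Fin N) (ZMod 2)) (HZ : Matrix (Fin nZ) (Fin N) (ZMod 2))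
    (w l : ℕ) (hl2 : 2 ≤ l)
    (hprob : 2 * Real.exp 1 * (Nat.choose (maxColW HZ) (w + 1) : ℝ) *
        (1 / (l : ℝ)) ^ (w + 1) * ((min (maxColW HZ * maxRowW HZ) N : ℕ) : ℝ) * (l : ℝ)
      ≤ 1) :
    ∃ κ : Fin nZ → Fin l, ∀ p : TQubit N nX l,
      wt (fun r => thickHZ HX HZ l κ r p) ≤ max (w + 2) (maxRowW HX) := by
  have : Nonempty (Fin l) := ⟨⟨0, by omega⟩⟩
  have h : 2 * Real.exp 1 * (maxColW HZ).choose (w + 1) *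
      min (maxColW HZ * maxRowW HZ) (Fintype.card (Fin N))
        ≤ (Fintype.card (Fin l) : ℝ) ^ w := by
    have hl : (l : ℝ) ≠ 0 := by positivity
    rw [Fintype.card_fin, Fintype.card_fin, ← one_mul ((l : ℝ) ^ w)]
    refine le_of_eq_of_le ?_ (mul_le_mul_of_nonneg_right hprob (by positivity))
    rw [one_div, inv_pow, pow_succ]
    field_simp
  obtain ⟨κ, hκ⟩ := exists_coloring_card_colSupp_le HZ w h
  exact ⟨κ, wt_thickHZ_col_le HX HZ κ hκ⟩

/-- If `w ≥ 1` and `l ≥ max(2, q_Z)` satisfy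
`2·e·binom(q_Z, w+1)·(1/l)^{w+1}·min(q_Z·w_Z, N)·l ≤ 1`, then there is a choice function
`κ` for which every column of the Z-type generator matrix of the thickened code has weight
at most `max(w+2, w_X)`. -/
theorem stmt11 (HX : Matrix (Fin nX) (Fin N) (ZMod 2)) (HZ : Matrix (Fin nZ) (Fin N) (ZMod 2))
    (hCSS : HX * HZ.transpose = 0) (w l : ℕ) (hw : 1 ≤ w) (hl2 : 2 ≤ l)
    (hlq : maxColW HZ ≤ l)
    (hprob : 2 * Real.exp 1 * (Nat.choose (maxColW HZ) (w + 1) : ℝ) *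
        (1 / (l : ℝ)) ^ (w + 1) * ((min (maxColW HZ * maxRowW HZ) N : ℕ) : ℝ) * (l : ℝ)
      ≤ 1) :
    ∃ κ : Fin nZ → Fin l, ∀ p : TQubit N nX l,
      wt (fun r => thickHZ HX HZ l κ r p) ≤ max (w + 2) (maxRowW HX) :=
  stmt11_general HX HZ w l hl2 hprob
end

section
/- For all integers q ≥ 1, w ≥ 1 and l ≥ q, the binomial tail satisfies: the sum over u from w+1 to q of binom(q,u)·(1/l)^u·(1 − 1/l)^{q−u} is at most 2·binom(q, w+1)·(1/l)^{w+1}. -/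
/-- For all integers `q ≥ 1`, `w ≥ 1` and `l ≥ q`, the binomial tail
satisfies `∑_{u=w+1}^{q} binom(q,u)·(1/l)^u·(1 − 1/l)^{q−u} ≤ 2·binom(q, w+1)·(1/l)^{w+1}`. -/
theorem stmt12 (q w l : ℕ) (hq : 1 ≤ q) (hw : 1 ≤ w) (hl : q ≤ l) :
    ∑ u ∈ Finset.Icc (w + 1) q,
        (Nat.choose q u : ℝ) * (1 / (l : ℝ)) ^ u * (1 - 1 / (l : ℝ)) ^ (q - u)
      ≤ 2 * (Nat.choose q (w + 1) : ℝ) * (1 / (l : ℝ)) ^ (w + 1) := by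
  have hl1 : 1 ≤ l := le_trans hq hl
  have hlR : (1:ℝ) ≤ (l:ℝ) := by exact_mod_cast hl1
  have hlpos : (0:ℝ) < (l:ℝ) := by linarith
  set p : ℝ := 1 / (l:ℝ) with hp
  have hp0 : 0 ≤ p := by positivity
  have hp1 : p ≤ 1 := by
    rw [hp, div_le_one hlpos]; linarith
  -- step: ratio at most 1/2
  have key : ∀ u, w + 1 ≤ u →
      (Nat.choose q (u+1) : ℝ) * p ^ (u+1) ≤ (1/2) * ((Nat.choose q u : ℝ) * p ^ u) := by
    intro u hu
    have hnat : 2 * Nat.choose q (u+1) ≤ Nat.choose q u * l := by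
      have h1 : Nat.choose q (u+1) * (u+1) = Nat.choose q u * (q - u) :=
        Nat.choose_succ_right_eq q u
      have h2 : 2 * Nat.choose q (u+1) ≤ Nat.choose q (u+1) * (u+1) := by
        have : 2 ≤ u + 1 := by omega
        calc 2 * Nat.choose q (u+1) = Nat.choose q (u+1) * 2 := Nat.mul_comm _ _
          _ ≤ Nat.choose q (u+1) * (u+1) := Nat.mul_le_mul_left _ this
      have h3 : Nat.choose q u * (q - u) ≤ Nat.choose q u * l :=
        Nat.mul_le_mul_left _ (by omega)
      omega
    have hR : (Nat.choose q (u+1) : ℝ) * p ≤ (1/2) * (Nat.choose q u : ℝ) := by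
      rw [hp]
      rw [mul_one_div, div_le_iff₀ hlpos]
      have : (2:ℝ) * (Nat.choose q (u+1):ℝ) ≤ (Nat.choose q u : ℝ) * (l:ℝ) := by
        exact_mod_cast hnat
      linarith
    calc (Nat.choose q (u+1) : ℝ) * p ^ (u+1)
        = ((Nat.choose q (u+1) : ℝ) * p) * p ^ u := by ring
      _ ≤ ((1/2) * (Nat.choose q u : ℝ)) * p ^ u :=
          mul_le_mul_of_nonneg_right hR (pow_nonneg hp0 u)
      _ = (1/2) * ((Nat.choose q u : ℝ) * p ^ u) := by ring
  -- geometric decay from w+1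
  have bound : ∀ u, w + 1 ≤ u →
      (Nat.choose q u : ℝ) * p ^ u ≤
        ((Nat.choose q (w+1) : ℝ) * p ^ (w+1)) * (1/2) ^ (u - (w+1)) := by
    intro u hu
    induction u, hu using Nat.le_induction with
    | base => simp
    | succ n hn ih =>
      have step := key n hn
      have h2 : n + 1 - (w + 1) = (n - (w+1)) + 1 := by omega
      calc (Nat.choose q (n+1) : ℝ) * p ^ (n+1)
          ≤ (1/2) * ((Nat.choose q n : ℝ) * p ^ n) := step
        _ ≤ (1/2) * (((Nat.choose q (w+1) : ℝ) * p ^ (w+1)) * (1/2) ^ (n - (w+1))) := by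
            have : (0:ℝ) ≤ 1/2 := by norm_num
            exact mul_le_mul_of_nonneg_left ih this
        _ = ((Nat.choose q (w+1) : ℝ) * p ^ (w+1)) * (1/2) ^ (n + 1 - (w+1)) := by
            rw [h2]; ring
  have hA : 0 ≤ (Nat.choose q (w+1) : ℝ) * p ^ (w+1) := by positivity
  calc ∑ u ∈ Finset.Icc (w + 1) q,
        (Nat.choose q u : ℝ) * p ^ u * (1 - p) ^ (q - u)
      ≤ ∑ u ∈ Finset.Icc (w + 1) q,
          ((Nat.choose q (w+1) : ℝ) * p ^ (w+1)) * (1/2) ^ (u - (w+1)) := by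
        apply Finset.sum_le_sum
        intro u hu
        rw [Finset.mem_Icc] at hu
        have h1 : (Nat.choose q u : ℝ) * p ^ u * (1 - p) ^ (q - u)
            ≤ (Nat.choose q u : ℝ) * p ^ u := by
          have h1p : (1 - p) ^ (q - u) ≤ 1 :=
            pow_le_one₀ (by linarith) (by linarith)
          have h0 : 0 ≤ (Nat.choose q u : ℝ) * p ^ u := by positivity
          calc (Nat.choose q u : ℝ) * p ^ u * (1 - p) ^ (q - u)
              ≤ (Nat.choose q u : ℝ) * p ^ u * 1 :=
                mul_le_mul_of_nonneg_left h1p h0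
            _ = (Nat.choose q u : ℝ) * p ^ u := by ring
        exact le_trans h1 (bound u hu.1)
    _ = ((Nat.choose q (w+1) : ℝ) * p ^ (w+1)) *
          ∑ u ∈ Finset.Icc (w + 1) q, ((1:ℝ)/2) ^ (u - (w+1)) := by
        rw [Finset.mul_sum]
    _ ≤ ((Nat.choose q (w+1) : ℝ) * p ^ (w+1)) * 2 := by
        apply mul_le_mul_of_nonneg_left _ hA
        rw [show Finset.Icc (w+1) q = Finset.Ico (w+1) (q+1) by rw [Nat.Icc_eq_range', Nat.Ico_eq_range'], Finset.sum_Ico_eq_sum_range]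
        have heq : ∀ i ∈ Finset.range (q + 1 - (w+1)), ((1:ℝ)/2) ^ (w + 1 + i - (w+1)) = ((1:ℝ)/2)^i := by
          intro i _
          congr 1
          omega
        rw [Finset.sum_congr rfl heq]
        have hg := geom_sum_eq (by norm_num : (1/2:ℝ) ≠ 1) (q + 1 - (w+1))
        rw [hg]
        have : (0:ℝ) ≤ (1/2:ℝ) ^ (q + 1 - (w+1)) := by positivity
        have h1 : ((1/2:ℝ) ^ (q + 1 - (w+1)) - 1) / (1/2 - 1)
            = 2 - 2 * (1/2:ℝ) ^ (q + 1 - (w+1)) := by ring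
        rw [h1]; linarith
    _ = 2 * (Nat.choose q (w+1) : ℝ) * p ^ (w+1) := by ring
end
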